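/- arXiv:2503.14479 — 5 statements merged into one kernel-verified Lean document; each statement's English description precedes it below -/
import Mathlib

section
/- Let H be a finite-dimensional real inner product space, let β > 0, and let g : H → ℝ be a convex, differentiable function whose gradient ∇g is β-Lipschitz. Then for all x, y ∈ H, ⟨x − y, ∇g(x) − ∇g(y)⟩ ≥ (1/β)‖∇g(x) − ∇g(y)‖² (Baillon–Haddad cocoercivity inequality). -/
/-!
Convexity puts `g` above its tangent planes, and the `β`-Lipschitz gradient puts it below the
tangent paraboloids of curvature `β`. Comparing the two at the gradient step
`u = b - β⁻¹ (∇g b - ∇g a)` gives `g b ≥ g a + ⟪∇g a, b - a⟫ + ‖∇g a - ∇g b‖² / (2β)`;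
adding this to the same inequality with `a` and `b` swapped gives the claim.
-/

open AffineMap Set
open scoped RealInnerProductSpace

section

variable {H : Type*} [NormedAddCommGroup H] [InnerProductSpace ℝ H] [CompleteSpace H]
  {g : H → ℝ} {g' : H → H}

theorem HasGradientAt.hasDerivAt_comp_lineMap {z w : H} {t : ℝ} {v : H}
    (h : HasGradientAt g v (lineMap z w t)) :
    HasDerivAt (fun s => g (lineMap z w s)) ⟪v, w - z⟫ t := by
  have := h.hasFDerivAt.comp_hasDerivAt t hasDerivAt_lineMap
  simp only [InnerProductSpace.toDual_apply_apply] at this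
  exact this

theorem ConvexOn.add_inner_le_of_hasGradientAt (hg : ConvexOn ℝ univ g) {z : H} {v : H}
    (hv : HasGradientAt g v z) (w : H) : g z + ⟪v, w - z⟫ ≤ g w := by
  have hφ : ConvexOn ℝ univ (fun s => g (lineMap z w s)) :=
    hg.comp_affineMap (lineMap z w)
  have := hφ.le_slope_of_hasDerivAt (mem_univ 0) (mem_univ 1) zero_lt_one
    (HasGradientAt.hasDerivAt_comp_lineMap (by simpa using hv))
  simp only [slope_def_field, lineMap_apply_one, lineMap_apply_zero, sub_zero, div_one] at this
  linarith

theorem le_add_inner_add_sq_norm_of_lipschitz_gradient {β : ℝ}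
    (hgrad : ∀ z, HasGradientAt g (g' z) z)
    (hlip : ∀ z w, ‖g' z - g' w‖ ≤ β * ‖z - w‖) (z w : H) :
    g w ≤ g z + ⟪g' z, w - z⟫ + β / 2 * ‖w - z‖ ^ 2 := by
  set v := w - z
  let ψ : ℝ → ℝ := fun t => g (lineMap z w t) - t * ⟪g' z, v⟫ - β / 2 * t ^ 2 * ‖v‖ ^ 2
  have hψ : ∀ t, HasDerivAt ψ (⟪g' (lineMap z w t) - g' z, v⟫ - β * t * ‖v‖ ^ 2) t := by
    intro t
    have := (((hgrad (lineMap z w t)).hasDerivAt_comp_lineMap).sub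
      ((hasDerivAt_id t).mul_const ⟪g' z, v⟫)).sub
      (((hasDerivAt_pow 2 t).const_mul (β / 2)).mul_const (‖v‖ ^ 2))
    refine this.congr_deriv ?_
    simp only [inner_sub_left]
    push_cast
    ring
  have hψ'_nonpos : ∀ t ∈ interior (Icc (0 : ℝ) 1),
      ⟪g' (lineMap z w t) - g' z, v⟫ - β * t * ‖v‖ ^ 2 ≤ 0 := by
    intro t ht
    rw [interior_Icc] at ht
    have hdist : ‖lineMap z w t - z‖ = t * ‖v‖ := by
      rw [lineMap_apply_module', add_sub_cancel_right, norm_smul, Real.norm_of_nonneg ht.1.le]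
    calc ⟪g' (lineMap z w t) - g' z, v⟫ - β * t * ‖v‖ ^ 2
        ≤ ‖g' (lineMap z w t) - g' z‖ * ‖v‖ - β * t * ‖v‖ ^ 2 := by
          gcongr; exact real_inner_le_norm _ _
      _ ≤ β * ‖lineMap z w t - z‖ * ‖v‖ - β * t * ‖v‖ ^ 2 := by
          gcongr; exact hlip _ _
      _ = 0 := by rw [hdist]; ring
  have hψ_anti : AntitoneOn ψ (Icc 0 1) :=
    antitoneOn_of_hasDerivWithinAt_nonpos (convex_Icc 0 1)
      (fun t _ => (hψ t).continuousAt.continuousWithinAt)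
      (fun t _ => (hψ t).hasDerivWithinAt) hψ'_nonpos
  have hψ01 : ψ 1 ≤ ψ 0 :=
    hψ_anti (left_mem_Icc.2 zero_le_one) (right_mem_Icc.2 zero_le_one) zero_le_one
  simp only [ψ, lineMap_apply_one, lineMap_apply_zero] at hψ01
  linarith

theorem ConvexOn.add_inner_add_sq_norm_div_le {β : ℝ} (hβ : 0 < β) (hg : ConvexOn ℝ univ g)
    (hgrad : ∀ z, HasGradientAt g (g' z) z)
    (hlip : ∀ z w, ‖g' z - g' w‖ ≤ β * ‖z - w‖) (a b : H) :
    g a + ⟪g' a, b - a⟫ + ‖g' a - g' b‖ ^ 2 / (2 * β) ≤ g b := by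
  set d := g' b - g' a
  -- `u` minimizes the quadratic upper bound of `g - ⟪g' a, ·⟫` around `b`
  set u := b - β⁻¹ • d
  have lower := hg.add_inner_le_of_hasGradientAt (hgrad a) u
  have upper := le_add_inner_add_sq_norm_of_lipschitz_gradient hgrad hlip b u
  have hinner : ⟪g' b, u - b⟫ - ⟪g' a, u - a⟫ = -⟪g' a, b - a⟫ - ‖d‖ ^ 2 / β := by
    have hub : u - b = -(β⁻¹ • d) := by simp only [u]; abel
    have hua : u - a = (b - a) - β⁻¹ • d := by simp only [u]; abel
    have hself : ⟪g' b, d⟫ - ⟪g' a, d⟫ = ‖d‖ ^ 2 := by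
      rw [← inner_sub_left, real_inner_self_eq_norm_sq]
    rw [hub, hua, inner_neg_right, inner_sub_right, real_inner_smul_right,
      real_inner_smul_right, ← hself]
    ring
  have hnorm : β / 2 * ‖u - b‖ ^ 2 = ‖d‖ ^ 2 / (2 * β) := by
    simp only [u, sub_sub_cancel_left, norm_neg, norm_smul, norm_inv, Real.norm_of_nonneg hβ.le]
    field_simp
  have hhalf : ‖d‖ ^ 2 / β = 2 * (‖d‖ ^ 2 / (2 * β)) := by field_simp
  rw [norm_sub_rev]
  linarith

end

/-- Baillon–Haddad cocoercivity inequality: if `g` is convex and differentiable with a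
`β`-Lipschitz gradient `g'`, then `⟨x - y, g' x - g' y⟩ ≥ ‖g' x - g' y‖²/β`. -/
theorem baillon_haddad
    {H : Type*} [NormedAddCommGroup H] [InnerProductSpace ℝ H] [FiniteDimensional ℝ H]
    (β : ℝ) (hβ : 0 < β)
    (g : H → ℝ) (g' : H → H)
    (hg_convex : ConvexOn ℝ Set.univ g)
    (hg_grad : ∀ z : H, HasGradientAt g (g' z) z)
    (hg_lip : ∀ z w : H, ‖g' z - g' w‖ ≤ β * ‖z - w‖)
    (x y : H) :
    ‖g' x - g' y‖^2 / β ≤ (inner ℝ (x - y) (g' x - g' y) : ℝ) := by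
  have hxy := hg_convex.add_inner_add_sq_norm_div_le hβ hg_grad hg_lip x y
  have hyx := hg_convex.add_inner_add_sq_norm_div_le hβ hg_grad hg_lip y x
  have hsum : ⟪g' x, y - x⟫ + ⟪g' y, x - y⟫ = -⟪x - y, g' x - g' y⟫ := by
    simp only [inner_sub_left, inner_sub_right, real_inner_comm]
    ring
  have hhalf : ‖g' x - g' y‖ ^ 2 / β = 2 * (‖g' x - g' y‖ ^ 2 / (2 * β)) := by field_simp
  rw [norm_sub_rev] at hyx
  linarith
end

section
/- Let H be a finite-dimensional real inner product space, let β > 0, let f : H → ℝ ∪ {+∞} be proper, lower semicontinuous, and convex, let g : H → ℝ be convex and differentiable with β-Lipschitz gradient, and assume that f + g attains its minimum, with optimal value μ = min_{x ∈ H} (f(x) + g(x)). Let x₀ ∈ dom f, let 0 < ε < 1/β, let (γₙ) be a sequence in [ε, 2/β − ε], and define the proximal gradient iterates by xₙ₊₁ = prox_{γₙ f}(xₙ − γₙ ∇g(xₙ)). Then the sequence (f(xₙ) + g(xₙ)) is nonincreasing and converges to μ, and ∑ₙ (f(xₙ) + g(xₙ) − μ) < +∞. -/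
open Filter Topology

noncomputable section

/-- Convexity for extended-real-valued functions. -/
def ConvexE {E : Type*} [AddCommGroup E] [Module ℝ E] (f : E → EReal) : Prop :=
  ∀ x y : E, ∀ a b : ℝ, 0 ≤ a → 0 ≤ b → a + b = 1 →
    f (a • x + b • y) ≤ (a : EReal) * f x + (b : EReal) * f y

/-! For `F = f + g`, one forward–backward step `x ↦ x⁺ = prox_{γf}(x - γ∇g x)` satisfies the
three-point inequality
`γ (F x⁺ - F y) ≤ ‖x - y‖²/2 - ‖x⁺ - y‖²/2 + (γβ - 1)/2 ‖x - x⁺‖²` for every `y ∈ dom f`: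
add the variational inequality of the prox, the gradient inequality of the convex `g` and the
descent lemma for `g`. With `y = xₙ` and `γβ/2 - 1 ≤ -εβ/2` it gives sufficient decrease of
`F xₙ`; with `y = x*` it shows that `εβ²‖xₙ - x*‖²/2 + 2 (F xₙ - μ)` drops at each step by at
least `ε²β² (F xₙ₊₁ - μ)`, so these gaps are summable. -/

open Set
open scoped RealInnerProductSpace

section Smooth

variable {H : Type*} [NormedAddCommGroup H] [InnerProductSpace ℝ H] [CompleteSpace H]
  {g : H → ℝ} {g' : H → H} {a x y v : H}

theorem HasGradientAt.hasDerivAt_comp_add_smul {t : ℝ} (h : HasGradientAt g a (x + t • v)) :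
    HasDerivAt (fun s : ℝ => g (x + s • v)) ⟪a, v⟫ t := by
  have hline : HasDerivAt (fun s : ℝ => x + s • v) v t := by
    simpa using ((hasDerivAt_id t).smul_const v).const_add x
  have hcomp := h.hasFDerivAt.comp_hasDerivAt t hline
  simp only [InnerProductSpace.toDual_apply_apply] at hcomp
  exact hcomp

theorem ConvexOn.add_inner_le_of_hasGradientAt_s7 (hg : ConvexOn ℝ univ g)
    (h : HasGradientAt g a x) : g x + ⟪a, y - x⟫ ≤ g y := by
  have hline : ConvexOn ℝ univ (fun s : ℝ => g (x + s • (y - x))) := by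
    simpa [Function.comp_def, AffineMap.lineMap_apply, add_comm] using
      hg.comp_affineMap (AffineMap.lineMap x y)
  have hderiv : HasDerivAt (fun s : ℝ => g (x + s • (y - x))) ⟪a, y - x⟫ 0 :=
    HasGradientAt.hasDerivAt_comp_add_smul (by simpa using h)
  have hslope : slope (fun s : ℝ => g (x + s • (y - x))) 0 1 = g y - g x := by
    simp [slope_def_field]
  linarith [hline.le_slope_of_hasDerivAt (mem_univ 0) (mem_univ 1) one_pos hderiv]

theorem le_add_inner_add_sq_of_lipschitz_gradient {β : ℝ}
    (hg : ∀ z, HasGradientAt g (g' z) z) (hlip : ∀ z w, ‖g' z - g' w‖ ≤ β * ‖z - w‖) (x y : H) :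
    g y ≤ g x + ⟪g' x, y - x⟫ + β / 2 * ‖y - x‖ ^ 2 := by
  set v := y - x
  set ψ : ℝ → ℝ := fun t => g (x + t • v) - ⟪g' x, v⟫ * t - β / 2 * ‖v‖ ^ 2 * t ^ 2
  have hψ : ∀ t, HasDerivAt ψ (⟪g' (x + t • v), v⟫ - ⟪g' x, v⟫ - β / 2 * ‖v‖ ^ 2 * (2 * t)) t :=
    fun t => (((hg _).hasDerivAt_comp_add_smul).sub ((hasDerivAt_id t).const_mul _ |>.congr_deriv
      (mul_one _))).sub ((hasDerivAt_pow 2 t).const_mul _ |>.congr_deriv (by ring))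
  have hanti : AntitoneOn ψ (Icc 0 1) := by
    refine antitoneOn_of_deriv_nonpos (convex_Icc 0 1)
      (continuous_iff_continuousAt.2 fun t => (hψ t).continuousAt).continuousOn
      (fun t _ => (hψ t).differentiableAt.differentiableWithinAt) fun t ht => ?_
    rw [interior_Icc] at ht
    have hgrad : ⟪g' (x + t • v) - g' x, v⟫ ≤ β * t * ‖v‖ ^ 2 :=
      calc ⟪g' (x + t • v) - g' x, v⟫ ≤ ‖g' (x + t • v) - g' x‖ * ‖v‖ := real_inner_le_norm _ _
        _ ≤ β * ‖t • v‖ * ‖v‖ := by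
          gcongr; simpa using hlip (x + t • v) x
        _ = β * t * ‖v‖ ^ 2 := by rw [norm_smul, Real.norm_of_nonneg ht.1.le]; ring
    rw [(hψ t).deriv, ← inner_sub_left]
    linarith
  have hψ0 : ψ 0 = g x := by simp [ψ]
  have hψ1 : ψ 1 = g y - ⟪g' x, y - x⟫ - β / 2 * ‖y - x‖ ^ 2 := by simp [ψ, v]
  linarith [hanti (left_mem_Icc.2 zero_le_one) (right_mem_Icc.2 zero_le_one) zero_le_one]

end Smooth

theorem le_of_forall_le_add_mul {a b c : ℝ} (h : ∀ t ∈ Ioc (0 : ℝ) 1, a ≤ b + t * c) : a ≤ b := by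
  have hlim : Tendsto (fun t : ℝ => b + t * c) (𝓝[>] 0) (𝓝 b) :=
    ((by fun_prop : Continuous fun t : ℝ => b + t * c).tendsto' 0 b (by simp)).mono_left
      nhdsWithin_le_nhds
  exact ge_of_tendsto hlim (eventually_of_mem (Ioc_mem_nhdsGT one_pos) h)

section Prox

variable {H : Type*} [NormedAddCommGroup H] {f : H → EReal} {γ : ℝ} {u p y : H}

/-- `p = prox_{γf} u`. -/
def IsProx (f : H → EReal) (γ : ℝ) (u p : H) : Prop :=
  ∀ y : H, (γ : EReal) * f p + ((1/2 * ‖u - p‖^2 : ℝ) : EReal) ≤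
    (γ : EReal) * f y + ((1/2 * ‖u - y‖^2 : ℝ) : EReal)

theorem IsProx.ne_top (hγ : 0 < γ) (h : IsProx f γ u p) {b : ℝ} (hy : f y = b) : f p ≠ ⊤ := by
  intro htop
  have := h y
  rw [htop, hy, EReal.coe_mul_top_of_pos hγ, EReal.top_add_coe, top_le_iff, ← EReal.coe_mul,
    ← EReal.coe_add] at this
  exact EReal.coe_ne_top _ this

theorem IsProx.inner_le [InnerProductSpace ℝ H] (hf : ConvexE f) (hγ : 0 < γ)
    (h : IsProx f γ u p) {a b : ℝ} (hp : f p = a) (hy : f y = b) :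
    ⟪u - p, y - p⟫ ≤ γ * (b - a) := by
  refine le_of_forall_le_add_mul (c := ‖y - p‖ ^ 2 / 2) fun t ht => ?_
  have hconv : f (p + t • (y - p)) ≤ ((t * b + (1 - t) * a : ℝ) : EReal) := by
    have := hf y p t (1 - t) ht.1.le (by linarith [ht.2]) (by ring)
    rwa [hy, hp, ← EReal.coe_mul, ← EReal.coe_mul, ← EReal.coe_add,
      show t • y + (1 - t) • p = p + t • (y - p) by module] at this
  have hmin := (h (p + t • (y - p))).trans (add_le_add_left
    (mul_le_mul_of_nonneg_left hconv (EReal.coe_nonneg.2 hγ.le)) _)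
  rw [hp, ← EReal.coe_mul, ← EReal.coe_mul, ← EReal.coe_add, ← EReal.coe_add,
    EReal.coe_le_coe_iff, show u - (p + t • (y - p)) = (u - p) - t • (y - p) by abel,
    norm_sub_sq_real (u - p), real_inner_smul_right, norm_smul, Real.norm_of_nonneg ht.1.le]
    at hmin
  nlinarith [ht.1]

end Prox

theorem IsProx.three_point {H : Type*} [NormedAddCommGroup H] [InnerProductSpace ℝ H]
    [CompleteSpace H] {f : H → EReal} {g : H → ℝ} {g' : H → H} {β γ a b : ℝ} {x p y : H}
    (hf : ConvexE f) (hg : ConvexOn ℝ univ g) (hg' : ∀ z, HasGradientAt g (g' z) z)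
    (hlip : ∀ z w, ‖g' z - g' w‖ ≤ β * ‖z - w‖) (hγ : 0 < γ) (h : IsProx f γ (x - γ • g' x) p)
    (hp : f p = a) (hy : f y = b) :
    γ * ((a + g p) - (b + g y)) ≤
      ‖x - y‖ ^ 2 / 2 - ‖p - y‖ ^ 2 / 2 + (γ * β - 1) / 2 * ‖x - p‖ ^ 2 := by
  have hprox := h.inner_le hf hγ hp hy
  have hdescent := le_add_inner_add_sq_of_lipschitz_gradient hg' hlip x p
  have hconvex := hg.add_inner_le_of_hasGradientAt_s7 (hg' x) (y := y)
  have hpolar : ‖x - y‖ ^ 2 = ‖x - p‖ ^ 2 - 2 * ⟪x - p, y - p⟫ + ‖p - y‖ ^ 2 := by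
    rw [show x - y = (x - p) - (y - p) by abel, norm_sub_sq_real, norm_sub_rev y p]
  have hsplit :
      ⟪x - γ • g' x - p, y - p⟫ = ⟪x - p, y - p⟫ - γ * (⟪g' x, y - x⟫ - ⟪g' x, p - x⟫) := by
    simp only [inner_sub_left, inner_sub_right, real_inner_smul_left]; ring
  rw [norm_sub_rev p x] at hdescent
  linarith [mul_le_mul_of_nonneg_left hdescent hγ.le, mul_le_mul_of_nonneg_left hconvex hγ.le]

theorem summable_of_le_sub_succ {a V : ℕ → ℝ} (ha : ∀ n, 0 ≤ a n) (hV : ∀ n, 0 ≤ V n)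
    (h : ∀ n, a n ≤ V n - V (n + 1)) : Summable a :=
  summable_of_sum_range_le ha fun N =>
    calc ∑ n ∈ Finset.range N, a n ≤ ∑ n ∈ Finset.range N, (V n - V (n + 1)) :=
          Finset.sum_le_sum fun n _ => h n
      _ = V 0 - V N := Finset.sum_range_sub' V N
      _ ≤ V 0 := sub_le_self _ (hV N)

theorem antitone_and_summable_sub_of_three_point {φ γ s D : ℕ → ℝ} {μ β ε : ℝ} (hβ : 0 < β)
    (hε : 0 < ε) (hγ : ∀ n, γ n ∈ Icc ε (2 / β - ε)) (hμ : ∀ n, μ ≤ φ n) (hD : ∀ n, 0 ≤ D n)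
    (hs : ∀ n, 0 ≤ s n)
    (hdecrease : ∀ n, γ n * (φ (n + 1) - φ n) ≤ (γ n * β / 2 - 1) * s n)
    (hgap : ∀ n, γ n * (φ (n + 1) - μ) ≤ D n / 2 - D (n + 1) / 2 + (γ n * β - 1) / 2 * s n) :
    Antitone φ ∧ Summable fun n => φ n - μ := by
  have hεβ : 0 ≤ ε * β := by positivity
  have hγβ : ∀ n, γ n * β ≤ 2 - ε * β := fun n => by
    have := (hγ n).2
    rw [le_sub_iff_add_le, le_div_iff₀ hβ] at this
    linarith
  have hsufficient : ∀ n, ε * β / 2 * s n ≤ γ n * (φ n - φ (n + 1)) := fun n => by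
    linarith [hdecrease n, mul_le_mul_of_nonneg_right (hγβ n) (hs n)]
  have hanti : ∀ n, φ (n + 1) ≤ φ n := fun n => by
    have := (hsufficient n).trans' (mul_nonneg (by positivity) (hs n))
    exact sub_nonneg.1 ((mul_nonneg_iff_of_pos_left (hε.trans_le (hγ n).1)).1 this)
  set V : ℕ → ℝ := fun n => ε * β ^ 2 / 2 * D n + 2 * (φ n - μ)
  have hlyapunov : ∀ n, ε * (ε * β ^ 2) * (φ (n + 1) - μ) ≤ V n - V (n + 1) := fun n => by
    have hgap' : ε * (φ (n + 1) - μ) ≤ D n / 2 - D (n + 1) / 2 + s n / 2 := by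
      linarith [hgap n, mul_le_mul_of_nonneg_right (hγ n).1 (sub_nonneg.2 (hμ (n + 1))),
        mul_le_mul_of_nonneg_right (hγβ n) (hs n), mul_nonneg hεβ (hs n)]
    have hs_le : ε * β ^ 2 * s n ≤ 4 * (φ n - φ (n + 1)) := by
      linarith [mul_le_mul_of_nonneg_left (hsufficient n) hβ.le,
        mul_le_mul_of_nonneg_right (hγβ n) (sub_nonneg.2 (hanti n)),
        mul_nonneg hεβ (sub_nonneg.2 (hanti n))]
    dsimp only [V]
    linarith [mul_le_mul_of_nonneg_left hgap' (by positivity : 0 ≤ ε * β ^ 2)]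
  have hsummable : Summable fun n => φ (n + 1) - μ :=
    (summable_mul_left_iff (by positivity : ε * (ε * β ^ 2) ≠ 0)).1 <|
      summable_of_le_sub_succ (fun n => mul_nonneg (by positivity) (sub_nonneg.2 (hμ _)))
        (fun n => add_nonneg (mul_nonneg (by positivity) (hD n))
          (mul_nonneg zero_le_two (sub_nonneg.2 (hμ n))))
        hlyapunov
  exact ⟨antitone_nat_of_succ_le hanti, (summable_nat_add_iff 1).1 hsummable⟩

theorem proximal_gradient_value_convergence_general
    {H : Type*} [NormedAddCommGroup H] [InnerProductSpace ℝ H] [FiniteDimensional ℝ H]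
    (β : ℝ) (hβ : 0 < β)
    (f : H → EReal)
    (hf_convex : ConvexE f)
    (g : H → ℝ) (g' : H → H)
    (hg_convex : ConvexOn ℝ Set.univ g)
    (hg_grad : ∀ z : H, HasGradientAt g (g' z) z)
    (hg_lip : ∀ z w : H, ‖g' z - g' w‖ ≤ β * ‖z - w‖)
    (xstar : H)
    (hxstar : ∀ y : H, f xstar + (g xstar : EReal) ≤ f y + (g y : EReal))
    (μ : ℝ) (hμ : (μ : EReal) = f xstar + (g xstar : EReal))
    (ε : ℝ) (hε : 0 < ε)
    (γ : ℕ → ℝ) (hγ : ∀ n, γ n ∈ Set.Icc ε (2/β - ε))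
    (x : ℕ → H) (hx0 : f (x 0) ≠ ⊤)
    (hiter : ∀ n, ∀ y : H,
      (γ n : EReal) * f (x (n+1)) +
          ((1/2 * ‖(x n - γ n • g' (x n)) - x (n+1)‖^2 : ℝ) : EReal) ≤
        (γ n : EReal) * f y +
          ((1/2 * ‖(x n - γ n • g' (x n)) - y‖^2 : ℝ) : EReal)) :
    ∃ φ : ℕ → ℝ,
      (∀ n, (φ n : EReal) = f (x n) + (g (x n) : EReal)) ∧
      Antitone φ ∧
      Tendsto φ atTop (𝓝 μ) ∧
      Summable (fun n => φ n - μ) := by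
  have hγpos : ∀ n, 0 < γ n := fun n => hε.trans_le (hγ n).1
  have hf_ne_bot : ∀ y, f y ≠ ⊥ := fun y hbot => by
    have := hxstar y
    rw [← hμ, hbot, EReal.bot_add, le_bot_iff] at this
    exact EReal.coe_ne_bot μ this
  have hprox : ∀ n, IsProx f (γ n) (x n - γ n • g' (x n)) (x (n + 1)) := hiter
  have hfin : ∀ n, f (x n) ≠ ⊤ := by
    intro n
    induction n with
    | zero => exact hx0
    | succ n ih => exact (hprox n).ne_top (hγpos n) (EReal.coe_toReal ih (hf_ne_bot _)).symm
  have hfx : ∀ n, f (x n) = ((f (x n)).toReal : EReal) := fun n =>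
    (EReal.coe_toReal (hfin n) (hf_ne_bot _)).symm
  have hfstar : f xstar = ((μ - g xstar : ℝ) : EReal) := by
    rw [EReal.coe_sub, hμ, EReal.add_sub_cancel_right]
  set φ : ℕ → ℝ := fun n => (f (x n)).toReal + g (x n)
  have hstep : ∀ n {y : H} {b : ℝ}, f y = b → γ n * (φ (n + 1) - (b + g y)) ≤
      ‖x n - y‖ ^ 2 / 2 - ‖x (n + 1) - y‖ ^ 2 / 2 + (γ n * β - 1) / 2 * ‖x n - x (n + 1)‖ ^ 2 :=
    fun n _ _ hy => (hprox n).three_point hf_convex hg_convex hg_grad hg_lip (hγpos n) (hfx _) hy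
  have hμφ : ∀ n, μ ≤ φ n := fun n => by
    have := hxstar (x n)
    rwa [← hμ, hfx n, ← EReal.coe_add, EReal.coe_le_coe_iff] at this
  have hdecrease : ∀ n, γ n * (φ (n + 1) - φ n) ≤ (γ n * β / 2 - 1) * ‖x n - x (n + 1)‖ ^ 2 :=
    fun n => by
      have := hstep n (hfx n)
      rw [sub_self, norm_zero, norm_sub_rev] at this
      linarith
  have hgap := fun n => sub_add_cancel μ (g xstar) ▸ hstep n hfstar
  obtain ⟨hanti, hsummable⟩ := antitone_and_summable_sub_of_three_point hβ hε hγ hμφ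
    (fun _ => sq_nonneg _) (fun _ => sq_nonneg _) hdecrease hgap
  refine ⟨φ, fun n => by rw [hfx n, EReal.coe_add], hanti, ?_, hsummable⟩
  simpa using hsummable.tendsto_atTop_zero.add_const μ

/-- Monotone convergence of the values along the proximal gradient iterates:
`f(xₙ) + g(xₙ)` is real-valued, nonincreasing, converges to the optimal value `μ`,
and `∑ₙ (f(xₙ) + g(xₙ) - μ) < +∞`. -/
theorem proximal_gradient_value_convergence
    {H : Type*} [NormedAddCommGroup H] [InnerProductSpace ℝ H] [FiniteDimensional ℝ H]
    (β : ℝ) (hβ : 0 < β)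
    (f : H → EReal)
    (hf_proper : ∃ z, f z ≠ ⊤) (hf_ne_bot : ∀ z, f z ≠ ⊥)
    (hf_lsc : LowerSemicontinuous f) (hf_convex : ConvexE f)
    (g : H → ℝ) (g' : H → H)
    (hg_convex : ConvexOn ℝ Set.univ g)
    (hg_grad : ∀ z : H, HasGradientAt g (g' z) z)
    (hg_lip : ∀ z w : H, ‖g' z - g' w‖ ≤ β * ‖z - w‖)
    (xstar : H)
    (hxstar : ∀ y : H, f xstar + (g xstar : EReal) ≤ f y + (g y : EReal))
    (μ : ℝ) (hμ : (μ : EReal) = f xstar + (g xstar : EReal))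
    (ε : ℝ) (hε : 0 < ε) (hεβ : ε < 1/β)
    (γ : ℕ → ℝ) (hγ : ∀ n, γ n ∈ Set.Icc ε (2/β - ε))
    (x : ℕ → H) (hx0 : f (x 0) ≠ ⊤)
    (hiter : ∀ n, ∀ y : H,
      (γ n : EReal) * f (x (n+1)) +
          ((1/2 * ‖(x n - γ n • g' (x n)) - x (n+1)‖^2 : ℝ) : EReal) ≤
        (γ n : EReal) * f y +
          ((1/2 * ‖(x n - γ n • g' (x n)) - y‖^2 : ℝ) : EReal)) :
    ∃ φ : ℕ → ℝ,
      (∀ n, (φ n : EReal) = f (x n) + (g (x n) : EReal)) ∧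
      Antitone φ ∧
      Tendsto φ atTop (𝓝 μ) ∧
      Summable (fun n => φ n - μ) :=
  proximal_gradient_value_convergence_general β hβ f hf_convex g g' hg_convex hg_grad hg_lip xstar
    hxstar μ hμ ε hε γ hγ x hx0 hiter
end
end

section
/- Let H and G₁, …, G_p be finite-dimensional real inner product spaces, let f : H → ℝ ∪ {+∞} be proper, lower semicontinuous, and convex, and for each k ∈ {1,…,p} let h_k : G_k → ℝ ∪ {+∞} be proper, lower semicontinuous, and convex, let L_k : H → G_k be a nonzero linear map, and let ω_k > 0 and ρ_k > 0. Assume the problem minimize over x ∈ H of f(x) + ∑_{k=1}^p ω_k (ʰρ_k h_k)(L_k x) has a solution. Set β = ∑_{k=1}^p ω_k ‖L_k‖²/ρ_k, fix x₀ ∈ H, 0 < ε < 1/β, and a sequence (γₙ) in [ε, 2/β − ε], and iterate: z_{n,k} = (ω_k/ρ_k) L_k*( L_k xₙ − prox_{ρ_k h_k}(L_k xₙ) ) for k = 1,…,p; yₙ = xₙ − γₙ ∑_{k=1}^p z_{n,k}; xₙ₊₁ = prox_{γₙ f} yₙ. Then (xₙ) converges to a solution of the minimization problem. -/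
/-!
The smooth part `g x = ∑ₖ ωₖ (ʰρₖhₖ)(Lₖ x)` is convex and differentiable with gradient
`∇g x = ∑ₖ (ωₖ/ρₖ) Lₖ*(Lₖ x - prox_{ρₖhₖ}(Lₖ x))`, and `∇g` is `1/β`-cocoercive because each
`I - prox_{ρₖhₖ}` is firmly nonexpansive (Cauchy–Schwarz turns the weights into `β`). The
iteration is thus the forward–backward method for `0 ∈ ∂f + ∇g`, whose zeros are exactly the
minimizers of `f + g`. Monotonicity of `∂f` and cocoercivity make `(xₙ)` Fejér monotone with
respect to every zero, with summable decrements forcing `xₙ - xₙ₊₁ → 0`. A cluster point, which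
exists in finite dimension, is a zero because the graph of `∂f` is closed (`f` is lower
semicontinuous), and Fejér monotonicity then upgrades subsequential convergence to convergence.
-/

open Filter Topology

noncomputable section

open scoped RealInnerProductSpace
open Finset

theorem EReal.coe_finset_sum {ι : Type*} (s : Finset ι) (f : ι → ℝ) :
    ((∑ i ∈ s, f i : ℝ) : EReal) = ∑ i ∈ s, (f i : EReal) :=
  map_sum (⟨⟨Real.toEReal, EReal.coe_zero⟩, EReal.coe_add⟩ : ℝ →+ EReal) f s

theorem LowerSemicontinuous.le_coe_of_tendsto {E : Type*} [TopologicalSpace E] {F : E → EReal}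
    (hF : LowerSemicontinuous F) {q : ℕ → E} {s : E} {r : ℕ → ℝ} {R : ℝ}
    (hq : Tendsto q atTop (𝓝 s)) (hr : Tendsto r atTop (𝓝 R)) (hle : ∀ j, F (q j) ≤ r j) :
    F s ≤ R :=
  calc F s ≤ liminf F (𝓝 s) := hF.le_liminf s
    _ ≤ liminf (F ∘ q) atTop := liminf_le_liminf_of_le hq
    _ ≤ liminf (fun j => (r j : EReal)) atTop := liminf_le_liminf (Eventually.of_forall hle)
    _ = R := (EReal.tendsto_coe.2 hr).liminf_eq

theorem nonpos_of_forall_le_mul {X C : ℝ} (h : ∀ t, 0 < t → t ≤ 1 → X ≤ t * C) : X ≤ 0 := by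
  have hlim : Tendsto (fun t => t * C) (𝓝[>] 0) (𝓝 0) :=
    tendsto_nhdsWithin_of_tendsto_nhds (by simpa using (continuous_mul_const C).tendsto 0)
  refine ge_of_tendsto hlim ?_
  filter_upwards [Ioo_mem_nhdsGT one_pos] with t ht using h t ht.1 ht.2.le

theorem tendsto_zero_of_add_le {a c : ℕ → ℝ} (ha : ∀ n, 0 ≤ a n) (hc : ∀ n, 0 ≤ c n)
    (h : ∀ n, a (n + 1) + c n ≤ a n) : Tendsto c atTop (𝓝 0) := by
  refine (summable_of_sum_range_le hc (c := a 0) fun m => ?_).tendsto_atTop_zero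
  calc ∑ i ∈ range m, c i ≤ ∑ i ∈ range m, (a i - a (i + 1)) :=
        sum_le_sum fun i _ => by linarith [h i]
    _ = a 0 - a m := sum_range_sub' a m
    _ ≤ a 0 := by linarith [ha m]

theorem tendsto_of_antitone_dist {X : Type*} [PseudoMetricSpace X] {x : ℕ → X} {a : X}
    {φ : ℕ → ℕ} (hx : Antitone fun n => dist (x n) a) (hφ : StrictMono φ)
    (h : Tendsto (x ∘ φ) atTop (𝓝 a)) : Tendsto x atTop (𝓝 a) := by
  rw [tendsto_iff_dist_tendsto_zero] at h ⊢
  exact (tendsto_iff_tendsto_subseq_of_antitone hx hφ.tendsto_atTop).2 h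

theorem ConvexE.convexOn_toReal {E : Type*} [AddCommGroup E] [Module ℝ E] {F : E → EReal}
    (hF : ConvexE F) (hbot : ∀ z, F z ≠ ⊥) :
    ConvexOn ℝ {z | F z ≠ ⊤} fun z => (F z).toReal := by
  have hle : ∀ x ∈ {z | F z ≠ ⊤}, ∀ y ∈ {z | F z ≠ ⊤}, ∀ a b : ℝ, 0 ≤ a → 0 ≤ b → a + b = 1 →
      F (a • x + b • y) ≤ ((a * (F x).toReal + b * (F y).toReal : ℝ) : EReal) := by
    intro x hx y hy a b ha hb hab
    rw [EReal.coe_add, EReal.coe_mul, EReal.coe_mul, EReal.coe_toReal hx (hbot x),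
      EReal.coe_toReal hy (hbot y)]
    exact hF x y a b ha hb hab
  refine ⟨fun x hx y hy a b ha hb hab => ?_, fun x hx y hy a b ha hb hab => ?_⟩
  · exact ne_top_of_le_ne_top (EReal.coe_ne_top _) (hle x hx y hy a b ha hb hab)
  · have := EReal.toReal_le_toReal (hle x hx y hy a b ha hb hab) (hbot _) (EReal.coe_ne_top _)
    rwa [EReal.toReal_coe] at this

section Minimization

variable {E : Type*} {F : E → EReal} {ψ : E → ℝ} {q : E}

theorem ne_top_of_forall_add_coe_le (hbot : ∀ z, F z ≠ ⊥) {z₀ : E} (hz₀ : F z₀ ≠ ⊤)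
    (hmin : ∀ z, F q + ψ q ≤ F z + ψ z) : F q ≠ ⊤ := fun htop => by
  have h := hmin z₀
  rw [htop, EReal.top_add_coe, top_le_iff, ← EReal.coe_toReal hz₀ (hbot z₀),
    ← EReal.coe_add] at h
  exact EReal.coe_ne_top _ h

theorem forall_add_coe_le_iff_isMinOn (hbot : ∀ z, F z ≠ ⊥) (hq : F q ≠ ⊤) :
    (∀ z, F q + ψ q ≤ F z + ψ z) ↔ IsMinOn (fun z => (F z).toReal + ψ z) {z | F z ≠ ⊤} q := by
  rw [isMinOn_iff]
  refine ⟨fun h z hz => ?_, fun h z => ?_⟩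
  · have := h z
    rwa [← EReal.coe_toReal hq (hbot q), ← EReal.coe_toReal hz (hbot z), ← EReal.coe_add,
      ← EReal.coe_add, EReal.coe_le_coe_iff] at this
  · by_cases hz : F z = ⊤
    · rw [hz, EReal.top_add_coe]; exact le_top
    · rw [← EReal.coe_toReal hq (hbot q), ← EReal.coe_toReal hz (hbot z), ← EReal.coe_add,
        ← EReal.coe_add, EReal.coe_le_coe_iff]
      exact h z hz

end Minimization

section Prox

variable {E : Type*} [NormedAddCommGroup E] {F : E → EReal}

/-- `q = prox_{cF} y`. -/
def IsProxPoint (c : ℝ) (F : E → EReal) (y q : E) : Prop :=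
  ∀ w, (c : EReal) * F q + ((1/2 * ‖y - q‖^2 : ℝ) : EReal) ≤
    (c : EReal) * F w + ((1/2 * ‖y - w‖^2 : ℝ) : EReal)

namespace IsProxPoint

variable {c : ℝ} {y q w : E}

theorem ne_top (hc : 0 < c) (hbot : ∀ z, F z ≠ ⊥) (hq : IsProxPoint c F y q) (hw : F w ≠ ⊤) :
    F q ≠ ⊤ := by
  intro htop
  have h := hq w
  rw [htop, EReal.mul_top_of_pos (by exact_mod_cast hc), EReal.top_add_coe, top_le_iff,
    ← EReal.coe_toReal hw (hbot w), ← EReal.coe_mul, ← EReal.coe_add] at h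
  exact EReal.coe_ne_top _ h

theorem toReal_add_le (hc : 0 < c) (hbot : ∀ z, F z ≠ ⊥) (hq : IsProxPoint c F y q)
    (hw : F w ≠ ⊤) :
    (F q).toReal + 1 / (2 * c) * ‖y - q‖ ^ 2 ≤ (F w).toReal + 1 / (2 * c) * ‖y - w‖ ^ 2 := by
  have h := hq w
  rw [← EReal.coe_toReal (hq.ne_top hc hbot hw) (hbot q), ← EReal.coe_toReal hw (hbot w),
    ← EReal.coe_mul, ← EReal.coe_mul, ← EReal.coe_add, ← EReal.coe_add,
    EReal.coe_le_coe_iff] at h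
  field_simp
  linarith

theorem isMinOn (hc : 0 < c) (hbot : ∀ z, F z ≠ ⊥) (hq : IsProxPoint c F y q) :
    IsMinOn (fun w => (F w).toReal + 1 / (2 * c) * ‖y - w‖ ^ 2) {w | F w ≠ ⊤} q :=
  isMinOn_iff.2 fun _ hw => hq.toReal_add_le hc hbot hw

end IsProxPoint

end Prox

section Subgradient

variable {E : Type*} [NormedAddCommGroup E] [InnerProductSpace ℝ E] {F : E → EReal}

/-- `v ∈ ∂F(s)`, for `F` that never takes the value `⊥` (otherwise `toReal` gives junk). -/
def HasSubgradientAt (F : E → EReal) (s v : E) : Prop :=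
  F s ≠ ⊤ ∧ ∀ w, F w ≠ ⊤ → (F s).toReal + ⟪v, w - s⟫ ≤ (F w).toReal

theorem HasSubgradientAt.inner_sub_nonneg {a b u v : E} (hu : HasSubgradientAt F a u)
    (hv : HasSubgradientAt F b v) : 0 ≤ ⟪u - v, a - b⟫ := by
  have h1 := hu.2 b hv.1
  have h2 := hv.2 a hu.1
  have h3 : ⟪u, b - a⟫ = -⟪u, a - b⟫ := by rw [← inner_neg_right, neg_sub]
  rw [inner_sub_left]
  linarith

theorem HasSubgradientAt.of_tendsto (hbot : ∀ z, F z ≠ ⊥) (hlsc : LowerSemicontinuous F)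
    {q v : ℕ → E} {s u : E} (hsub : ∀ j, HasSubgradientAt F (q j) (v j))
    (hq : Tendsto q atTop (𝓝 s)) (hv : Tendsto v atTop (𝓝 u)) : HasSubgradientAt F s u := by
  have hle : ∀ w, F w ≠ ⊤ → F s ≤ (((F w).toReal - ⟪u, w - s⟫ : ℝ) : EReal) := by
    intro w hw
    refine hlsc.le_coe_of_tendsto hq (tendsto_const_nhds.sub (hv.inner (hq.const_sub w)))
      fun j => ?_
    rw [← EReal.coe_toReal (hsub j).1 (hbot _), EReal.coe_le_coe_iff]
    linarith [(hsub j).2 w hw]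
  have hs : F s ≠ ⊤ := ne_top_of_le_ne_top (EReal.coe_ne_top _) (hle _ (hsub 0).1)
  refine ⟨hs, fun w hw => ?_⟩
  have := EReal.toReal_le_toReal (hle w hw) (hbot s) (EReal.coe_ne_top _)
  rw [EReal.toReal_coe] at this
  linarith

theorem ConvexE.hasSubgradientAt_of_isMinOn (hF : ConvexE F) (hbot : ∀ z, F z ≠ ⊥)
    {ψ : E → ℝ} {q a : E} (hq : F q ≠ ⊤)
    (hmin : IsMinOn (fun z => (F z).toReal + ψ z) {z | F z ≠ ⊤} q)
    (hψ : ∀ d, ∃ C, ∀ t, 0 < t → ψ (q + t • d) ≤ ψ q + t * ⟪a, d⟫ + t ^ 2 * C) :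
    HasSubgradientAt F q (-a) := by
  refine ⟨hq, fun w hw => ?_⟩
  obtain ⟨C, hC⟩ := hψ (w - q)
  have hconv := hF.convexOn_toReal hbot
  suffices (F q).toReal - (F w).toReal - ⟪a, w - q⟫ ≤ 0 by
    rw [inner_neg_left]; linarith
  refine nonpos_of_forall_le_mul (C := C) fun t ht0 ht1 => ?_
  have hseg : (1 - t) • q + t • w = q + t • (w - q) := by module
  have hcvx := hconv.2 hq hw (sub_nonneg.2 ht1) ht0.le (by ring)
  have hm := isMinOn_iff.1 hmin _ (hconv.1 hq hw (sub_nonneg.2 ht1) ht0.le (by ring))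
  simp only [hseg, smul_eq_mul] at hcvx hm
  have hψt := hC t ht0
  have : t * ((F q).toReal - (F w).toReal - ⟪a, w - q⟫) ≤ t * (t * C) := by linarith
  exact le_of_mul_le_mul_left this ht0

theorem HasSubgradientAt.isMinOn {ψ : E → ℝ} {q a : E} (hq : HasSubgradientAt F q (-a))
    (hψ : ∀ z, ψ q + ⟪a, z - q⟫ ≤ ψ z) :
    IsMinOn (fun z => (F z).toReal + ψ z) {z | F z ≠ ⊤} q := isMinOn_iff.2 fun z hz => by
  have := hq.2 z hz
  rw [inner_neg_left] at this
  linarith [hψ z]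

namespace IsProxPoint

variable {c : ℝ} {y q w : E}

theorem hasSubgradientAt (hc : 0 < c) (hF : ConvexE F) (hbot : ∀ z, F z ≠ ⊥)
    (hq : IsProxPoint c F y q) (hw : F w ≠ ⊤) : HasSubgradientAt F q (c⁻¹ • (y - q)) := by
  have hexp : ∀ d : E, ∀ t : ℝ, 1 / (2 * c) * ‖y - (q + t • d)‖ ^ 2 = 1 / (2 * c) * ‖y - q‖ ^ 2
      + t * ⟪-(c⁻¹ • (y - q)), d⟫ + t ^ 2 * (1 / (2 * c) * ‖d‖ ^ 2) := by
    intro d t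
    rw [← sub_sub, norm_sub_sq_real, inner_smul_right, norm_smul, inner_neg_left,
      real_inner_smul_left, Real.norm_eq_abs, mul_pow, sq_abs]
    field_simp
    ring
  simpa using hF.hasSubgradientAt_of_isMinOn hbot (hq.ne_top hc hbot hw) (hq.isMinOn hc hbot)
    fun d => ⟨_, fun t _ => (hexp d t).le⟩

end IsProxPoint

end Subgradient

section ForwardBackward

variable {H : Type*} [NormedAddCommGroup H] [InnerProductSpace ℝ H] {F : H → EReal} {B : H → H}
  {β ε : ℝ}

theorem lipschitzWith_of_cocoercive (hβ : 0 ≤ β)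
    (hB : ∀ z z', ‖B z - B z'‖ ^ 2 ≤ β * ⟪B z - B z', z - z'⟫) : LipschitzWith ⟨β, hβ⟩ B :=
  LipschitzWith.of_dist_le_mul fun z z' => by
    rw [dist_eq_norm, dist_eq_norm]
    show ‖B z - B z'‖ ≤ β * ‖z - z'‖
    have h := (hB z z').trans (mul_le_mul_of_nonneg_left (real_inner_le_norm _ _) hβ)
    rcases (norm_nonneg (B z - B z')).eq_or_lt with h0 | h0
    · rw [← h0]; positivity
    · exact le_of_mul_le_mul_right (by linarith) h0

theorem norm_sub_sq_add_le_of_inner_nonneg {d e b : H} {γ : ℝ} (hβ : 0 < β) (hγ : 0 ≤ γ)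
    (hb : ‖b‖ ^ 2 ≤ β * ⟪b, e⟫) (h : 0 ≤ ⟪d - γ • b, e - d⟫) :
    ‖e - d‖ ^ 2 + γ * (2 / β - γ) * ‖b‖ ^ 2 + ‖d - γ • b‖ ^ 2 ≤ ‖e‖ ^ 2 := by
  have hb' : 2 / β * ‖b‖ ^ 2 ≤ 2 * ⟪b, e⟫ := by
    rw [div_mul_eq_mul_div, div_le_iff₀ hβ]; linarith
  rw [inner_sub_left, inner_sub_right, inner_sub_right, real_inner_smul_left,
    real_inner_smul_left, real_inner_self_eq_norm_sq] at h
  rw [norm_sub_sq_real, norm_sub_sq_real, real_inner_smul_right, norm_smul, Real.norm_eq_abs,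
    mul_pow, sq_abs]
  nlinarith [mul_le_mul_of_nonneg_left hb' hγ, real_inner_comm e d, real_inner_comm b d]

theorem forwardBackward_fejer {γ : ℝ} {x q s : H} (hβ : 0 < β) (hγ : 0 < γ)
    (hB : ‖B x - B s‖ ^ 2 ≤ β * ⟪B x - B s, x - s⟫)
    (hq : HasSubgradientAt F q (γ⁻¹ • (x - γ • B x - q))) (hs : HasSubgradientAt F s (-B s)) :
    ‖q - s‖ ^ 2 + γ * (2 / β - γ) * ‖B x - B s‖ ^ 2 + ‖(x - q) - γ • (B x - B s)‖ ^ 2 ≤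
      ‖x - s‖ ^ 2 := by
  have e : γ • (γ⁻¹ • (x - γ • B x - q) - -B s) = (x - q) - γ • (B x - B s) := by
    rw [smul_sub, smul_inv_smul₀ hγ.ne']; module
  have hmono := mul_nonneg hγ.le (hq.inner_sub_nonneg hs)
  rw [← real_inner_smul_left, e, show q - s = (x - s) - (x - q) by abel] at hmono
  rw [show q - s = (x - s) - (x - q) by abel]
  exact norm_sub_sq_add_le_of_inner_nonneg hβ hγ.le hB hmono

theorem tendsto_sub_succ_of_fejer {x b : ℕ → H} {s : H} {γ : ℕ → ℝ} (hε : 0 < ε)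
    (hγ : ∀ n, γ n ∈ Set.Icc ε (2 / β - ε))
    (hfejer : ∀ n, ‖x (n + 1) - s‖ ^ 2 + γ n * (2 / β - γ n) * ‖b n‖ ^ 2 +
      ‖(x n - x (n + 1)) - γ n • b n‖ ^ 2 ≤ ‖x n - s‖ ^ 2) :
    Tendsto (fun n => x n - x (n + 1)) atTop (𝓝 0) := by
  set c : ℕ → ℝ := fun n => γ n * (2 / β - γ n) * ‖b n‖ ^ 2 + ‖(x n - x (n + 1)) - γ n • b n‖ ^ 2
  have hγε : ∀ n, ε * ε ≤ γ n * (2 / β - γ n) := fun n =>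
    mul_le_mul (hγ n).1 (by linarith [(hγ n).2]) hε.le (hε.trans_le (hγ n).1).le
  have hεb : ∀ n, (ε * ‖b n‖) ^ 2 ≤ γ n * (2 / β - γ n) * ‖b n‖ ^ 2 := fun n => by
    rw [mul_pow, sq ε]; exact mul_le_mul_of_nonneg_right (hγε n) (sq_nonneg _)
  have hcb : ∀ n, (ε * ‖b n‖) ^ 2 ≤ c n := fun n => by
    linarith [hεb n, sq_nonneg ‖(x n - x (n + 1)) - γ n • b n‖]
  have hcd : ∀ n, ‖(x n - x (n + 1)) - γ n • b n‖ ^ 2 ≤ c n := fun n => by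
    linarith [hεb n, sq_nonneg (ε * ‖b n‖)]
  have hc : Tendsto c atTop (𝓝 0) :=
    tendsto_zero_of_add_le (a := fun n => ‖x n - s‖ ^ 2) (fun n => sq_nonneg _)
      (fun n => (sq_nonneg _).trans (hcd n)) fun n => by linarith [hfejer n]
  refine squeeze_zero_norm (a := fun n => (1 + 2 / β / ε) * √(c n)) (fun n => ?_)
    (by simpa using hc.sqrt.const_mul (1 + 2 / β / ε))
  have hγn := hγ n
  have hγb : γ n * ‖b n‖ ≤ 2 / β / ε * √(c n) :=
    calc γ n * ‖b n‖ ≤ 2 / β * ‖b n‖ := by gcongr; linarith [hγn.2]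
      _ = 2 / β / ε * (ε * ‖b n‖) := by field_simp
      _ ≤ 2 / β / ε * √(c n) := by
        gcongr
        · exact div_nonneg (by linarith [hγn.1, hγn.2]) hε.le
        · exact Real.le_sqrt_of_sq_le (hcb n)
  calc ‖x n - x (n + 1)‖ ≤ ‖γ n • b n‖ + ‖(x n - x (n + 1)) - γ n • b n‖ := norm_le_insert' _ _
    _ ≤ (1 + 2 / β / ε) * √(c n) := by
      rw [norm_smul, Real.norm_of_nonneg (hε.trans_le hγn.1).le]
      linarith [Real.le_sqrt_of_sq_le (hcd n)]

theorem hasSubgradientAt_of_tendsto_forwardBackward (hbot : ∀ z, F z ≠ ⊥)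
    (hlsc : LowerSemicontinuous F) (hB : Continuous B) (hε : 0 < ε) {u q : ℕ → H} {γ : ℕ → ℝ}
    (hγ : ∀ j, ε ≤ γ j) {s : H} (hu : Tendsto u atTop (𝓝 s)) (hq : Tendsto q atTop (𝓝 s))
    (hsub : ∀ j, HasSubgradientAt F (q j) ((γ j)⁻¹ • (u j - γ j • B (u j) - q j))) :
    HasSubgradientAt F s (-B s) := by
  refine HasSubgradientAt.of_tendsto hbot hlsc hsub hq ?_
  have hv : ∀ j, (γ j)⁻¹ • (u j - γ j • B (u j) - q j) = (γ j)⁻¹ • (u j - q j) - B (u j) :=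
    fun j => by rw [sub_right_comm, smul_sub, inv_smul_smul₀ (hε.trans_le (hγ j)).ne']
  have hbdd : IsBoundedUnder (· ≤ ·) atTop fun j => ‖(γ j)⁻¹‖ :=
    isBoundedUnder_of ⟨ε⁻¹, fun j => by
      rw [Real.norm_of_nonneg (inv_nonneg.2 (hε.trans_le (hγ j)).le)]
      exact inv_anti₀ hε (hγ j)⟩
  have h0 := hbdd.smul_tendsto_zero (by simpa using hu.sub hq)
  simpa [hv] using h0.sub ((hB.tendsto s).comp hu)

theorem tendsto_forwardBackward [ProperSpace H] (hF : ConvexE F) (hbot : ∀ z, F z ≠ ⊥)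
    (hlsc : LowerSemicontinuous F) (hβ : 0 < β)
    (hB : ∀ z z', ‖B z - B z'‖ ^ 2 ≤ β * ⟪B z - B z', z - z'⟫) {s : H}
    (hs : HasSubgradientAt F s (-B s)) (hε : 0 < ε) {γ : ℕ → ℝ}
    (hγ : ∀ n, γ n ∈ Set.Icc ε (2 / β - ε)) {x : ℕ → H}
    (hx : ∀ n, IsProxPoint (γ n) F (x n - γ n • B (x n)) (x (n + 1))) :
    ∃ xlim, Tendsto x atTop (𝓝 xlim) ∧ HasSubgradientAt F xlim (-B xlim) := by
  have hγpos : ∀ n, 0 < γ n := fun n => hε.trans_le (hγ n).1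
  have hstep : ∀ n, HasSubgradientAt F (x (n + 1)) ((γ n)⁻¹ • (x n - γ n • B (x n) - x (n + 1))) :=
    fun n => (hx n).hasSubgradientAt (hγpos n) hF hbot hs.1
  have hfejer : ∀ z, HasSubgradientAt F z (-B z) → ∀ n, ‖x (n + 1) - z‖ ^ 2 +
      γ n * (2 / β - γ n) * ‖B (x n) - B z‖ ^ 2 +
      ‖(x n - x (n + 1)) - γ n • (B (x n) - B z)‖ ^ 2 ≤ ‖x n - z‖ ^ 2 :=
    fun z hz n => forwardBackward_fejer hβ (hγpos n) (hB _ _) (hstep n) hz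
  have hanti : ∀ z, HasSubgradientAt F z (-B z) → Antitone fun n => dist (x n) z :=
    fun z hz => antitone_nat_of_succ_le fun n => by
      have hγn : 0 ≤ γ n * (2 / β - γ n) := mul_nonneg (hγpos n).le (by linarith [(hγ n).2])
      rw [dist_eq_norm, dist_eq_norm, ← sq_le_sq₀ (norm_nonneg _) (norm_nonneg _)]
      linarith [hfejer z hz n, mul_nonneg hγn (sq_nonneg ‖B (x n) - B z‖),
        sq_nonneg ‖(x n - x (n + 1)) - γ n • (B (x n) - B z)‖]
  obtain ⟨xlim, -, φ, hφ, hxφ⟩ := tendsto_subseq_of_bounded Metric.isBounded_closedBall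
    fun n => Metric.mem_closedBall.2 (hanti s hs (Nat.zero_le n))
  have hxφ' : Tendsto (fun j => x (φ j + 1)) atTop (𝓝 xlim) := by
    simpa using hxφ.sub ((tendsto_sub_succ_of_fejer hε hγ (hfejer s hs)).comp hφ.tendsto_atTop)
  have hlim := hasSubgradientAt_of_tendsto_forwardBackward hbot hlsc
    (lipschitzWith_of_cocoercive hβ.le hB).continuous hε (fun j => (hγ (φ j)).1) hxφ hxφ'
    fun j => hstep (φ j)
  exact ⟨xlim, tendsto_of_antitone_dist (hanti xlim hlim) hφ hxφ, hlim⟩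

end ForwardBackward

section MoreauEnvelope

variable {G : Type*} [NormedAddCommGroup G] {h : G → EReal} {ρ : ℝ} {P : G → G} {w : G}

/-- The value `ʰρh u` of the Moreau envelope, computed at its minimizer `P u = prox_{ρh} u`. -/
def proxEnvelope (h : G → EReal) (ρ : ℝ) (P : G → G) (u : G) : ℝ :=
  (h (P u)).toReal + 1 / (2 * ρ) * ‖u - P u‖ ^ 2

theorem iInf_add_sq_eq_proxEnvelope (hρ : 0 < ρ) (hbot : ∀ v, h v ≠ ⊥) (hw : h w ≠ ⊤) {u : G}
    (hP : IsProxPoint ρ h u (P u)) :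
    ⨅ v : G, (h v + ((1/(2*ρ) * ‖u - v‖^2 : ℝ) : EReal)) = proxEnvelope h ρ P u := by
  refine le_antisymm ((iInf_le _ (P u)).trans_eq ?_) (le_iInf fun v => ?_)
  · rw [proxEnvelope, EReal.coe_add, EReal.coe_toReal (hP.ne_top hρ hbot hw) (hbot _)]
  · by_cases hv : h v = ⊤
    · rw [hv, EReal.top_add_coe]; exact le_top
    · rw [← EReal.coe_toReal hv (hbot v), ← EReal.coe_add, EReal.coe_le_coe_iff]
      exact hP.toReal_add_le hρ hbot hv

variable [InnerProductSpace ℝ G]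

theorem proxEnvelope_add_inner_le (hρ : 0 < ρ) (hh : ConvexE h) (hbot : ∀ v, h v ≠ ⊥)
    (hw : h w ≠ ⊤) (hP : ∀ u, IsProxPoint ρ h u (P u)) (u u' : G) :
    proxEnvelope h ρ P u + ρ⁻¹ * ⟪u - P u, u' - u⟫ ≤ proxEnvelope h ρ P u' := by
  have hsub := ((hP u).hasSubgradientAt hρ hh hbot hw).2 (P u') ((hP u').ne_top hρ hbot hw)
  rw [real_inner_smul_left,
    show P u' - P u = (u' - u) - ((u' - P u') - (u - P u)) by abel,
    inner_sub_right (u - P u) (u' - u), inner_sub_right (u - P u) (u' - P u'),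
    real_inner_self_eq_norm_sq] at hsub
  have hsq := mul_nonneg (by positivity : 0 ≤ 1 / (2 * ρ)) (sq_nonneg ‖(u' - P u') - (u - P u)‖)
  rw [norm_sub_sq_real, real_inner_comm] at hsq
  have hκ : ρ⁻¹ = 2 * (1 / (2 * ρ)) := by field_simp
  unfold proxEnvelope
  rw [hκ] at hsub ⊢
  linarith

theorem proxEnvelope_le_add_inner (hρ : 0 < ρ) (hbot : ∀ v, h v ≠ ⊥) (hw : h w ≠ ⊤)
    (hP : ∀ u, IsProxPoint ρ h u (P u)) (u u' : G) :
    proxEnvelope h ρ P u' ≤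
      proxEnvelope h ρ P u + ρ⁻¹ * ⟪u - P u, u' - u⟫ + 1 / (2 * ρ) * ‖u' - u‖ ^ 2 := by
  have hmin := (hP u').toReal_add_le hρ hbot ((hP u).ne_top hρ hbot hw)
  rw [show u' - P u = (u - P u) + (u' - u) by abel, norm_add_sq_real] at hmin
  have hκ : ρ⁻¹ = 2 * (1 / (2 * ρ)) := by field_simp
  unfold proxEnvelope
  rw [hκ]
  linarith

theorem sub_prox_firmlyNonexpansive (hρ : 0 < ρ) (hh : ConvexE h) (hbot : ∀ v, h v ≠ ⊥)
    (hw : h w ≠ ⊤) (hP : ∀ u, IsProxPoint ρ h u (P u)) (u u' : G) :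
    ‖(u - P u) - (u' - P u')‖ ^ 2 ≤ ⟪(u - P u) - (u' - P u'), u - u'⟫ := by
  have hmono := ((hP u).hasSubgradientAt hρ hh hbot hw).inner_sub_nonneg
    ((hP u').hasSubgradientAt hρ hh hbot hw)
  rw [← smul_sub, real_inner_smul_left,
    show P u - P u' = (u - u') - ((u - P u) - (u' - P u')) by abel, inner_sub_right,
    real_inner_self_eq_norm_sq] at hmono
  exact sub_nonneg.1 ((mul_nonneg_iff_of_pos_left (inv_pos.2 hρ)).1 hmono)

end MoreauEnvelope

section EnvelopeSum

variable {H : Type*} [NormedAddCommGroup H] [InnerProductSpace ℝ H]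
  {ι : Type*} [Fintype ι] {G : ι → Type*} [∀ k, NormedAddCommGroup (G k)]
  [∀ k, InnerProductSpace ℝ (G k)]

variable (L : ∀ k, H →L[ℝ] G k) (ω ρ : ι → ℝ) (h : ∀ k, G k → EReal) (P : ∀ k, G k → G k)

def envelopeSum (z : H) : ℝ :=
  ∑ k, ω k * proxEnvelope (h k) (ρ k) (P k) (L k z)

variable {L ω ρ h P}

theorem sum_mul_iInf_eq_envelopeSum (hρ : ∀ k, 0 < ρ k) (hbot : ∀ k v, h k v ≠ ⊥)
    (hdom : ∀ k, ∃ v, h k v ≠ ⊤) (hP : ∀ k u, IsProxPoint (ρ k) (h k) u (P k u)) (z : H) :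
    ∑ k, (ω k : EReal) * ⨅ v : G k, (h k v + ((1/(2*ρ k) * ‖L k z - v‖^2 : ℝ) : EReal)) =
      envelopeSum L ω ρ h P z := by
  rw [envelopeSum, EReal.coe_finset_sum]
  refine sum_congr rfl fun k _ => ?_
  obtain ⟨w, hw⟩ := hdom k
  rw [iInf_add_sq_eq_proxEnvelope (hρ k) (hbot k) hw (hP k _), EReal.coe_mul]

variable [CompleteSpace H] [∀ k, CompleteSpace (G k)]

theorem norm_sum_smul_adjoint_sq_le {c : ι → ℝ} (hc : ∀ k, 0 ≤ c k)
    {Q : ∀ k, G k} {d : H} (hQ : ∀ k, ‖Q k‖ ^ 2 ≤ ⟪Q k, L k d⟫) :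
    ‖∑ k, c k • ContinuousLinearMap.adjoint (L k) (Q k)‖ ^ 2 ≤
      (∑ k, c k * ‖L k‖ ^ 2) * ⟪∑ k, c k • ContinuousLinearMap.adjoint (L k) (Q k), d⟫ := by
  have hinner : ⟪∑ k, c k • ContinuousLinearMap.adjoint (L k) (Q k), d⟫ =
      ∑ k, c k * ⟪Q k, L k d⟫ := by
    simp only [sum_inner, real_inner_smul_left, ContinuousLinearMap.adjoint_inner_left]
  have hnorm : ‖∑ k, c k • ContinuousLinearMap.adjoint (L k) (Q k)‖ ≤
      ∑ k, c k * ‖L k‖ * ‖Q k‖ :=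
    (norm_sum_le _ _).trans <| sum_le_sum fun k _ => by
      rw [norm_smul, Real.norm_of_nonneg (hc k), mul_assoc, ← LinearIsometryEquiv.norm_map
        ContinuousLinearMap.adjoint (L k)]
      exact mul_le_mul_of_nonneg_left ((ContinuousLinearMap.adjoint (L k)).le_opNorm _) (hc k)
  calc _ ≤ (∑ k, c k * ‖L k‖ * ‖Q k‖) ^ 2 := by gcongr
    _ ≤ (∑ k, c k * ‖L k‖ ^ 2) * ∑ k, c k * ‖Q k‖ ^ 2 :=
      sum_sq_le_sum_mul_sum_of_sq_le_mul _ (fun k _ => mul_nonneg (hc k) (sq_nonneg _))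
        (fun k _ => mul_nonneg (hc k) (sq_nonneg _)) fun k _ => le_of_eq (by ring)
    _ ≤ _ := by
      rw [hinner]
      exact mul_le_mul_of_nonneg_left (sum_le_sum fun k _ => mul_le_mul_of_nonneg_left (hQ k)
        (hc k)) (sum_nonneg fun k _ => mul_nonneg (hc k) (sq_nonneg _))

variable (L ω ρ P) in
def envelopeSumGrad (z : H) : H :=
  ∑ k, (ω k / ρ k) • ContinuousLinearMap.adjoint (L k) (L k z - P k (L k z))

theorem inner_envelopeSumGrad (z d : H) :
    ⟪envelopeSumGrad L ω ρ P z, d⟫ = ∑ k, ω k * ((ρ k)⁻¹ * ⟪L k z - P k (L k z), L k d⟫) := by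
  simp only [envelopeSumGrad, sum_inner, real_inner_smul_left,
    ContinuousLinearMap.adjoint_inner_left, div_eq_mul_inv, mul_assoc]

theorem envelopeSum_add_inner_le (hω : ∀ k, 0 ≤ ω k) (hρ : ∀ k, 0 < ρ k)
    (hh : ∀ k, ConvexE (h k)) (hbot : ∀ k v, h k v ≠ ⊥) (hdom : ∀ k, ∃ v, h k v ≠ ⊤)
    (hP : ∀ k u, IsProxPoint (ρ k) (h k) u (P k u)) (z z' : H) :
    envelopeSum L ω ρ h P z + ⟪envelopeSumGrad L ω ρ P z, z' - z⟫ ≤ envelopeSum L ω ρ h P z' := by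
  rw [inner_envelopeSumGrad, envelopeSum, envelopeSum, ← sum_add_distrib]
  refine sum_le_sum fun k _ => ?_
  obtain ⟨w, hw⟩ := hdom k
  rw [← mul_add, map_sub]
  exact mul_le_mul_of_nonneg_left
    (proxEnvelope_add_inner_le (hρ k) (hh k) (hbot k) hw (hP k) (L k z) (L k z')) (hω k)

theorem envelopeSum_le_add (hω : ∀ k, 0 ≤ ω k) (hρ : ∀ k, 0 < ρ k) (hbot : ∀ k v, h k v ≠ ⊥)
    (hdom : ∀ k, ∃ v, h k v ≠ ⊤) (hP : ∀ k u, IsProxPoint (ρ k) (h k) u (P k u))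
    (z d : H) (t : ℝ) :
    envelopeSum L ω ρ h P (z + t • d) ≤ envelopeSum L ω ρ h P z +
      t * ⟪envelopeSumGrad L ω ρ P z, d⟫ + t ^ 2 * ∑ k, ω k * (1 / (2 * ρ k) * ‖L k d‖ ^ 2) := by
  rw [inner_envelopeSumGrad, envelopeSum, envelopeSum, mul_sum, mul_sum, ← sum_add_distrib,
    ← sum_add_distrib]
  refine sum_le_sum fun k _ => ?_
  obtain ⟨w, hw⟩ := hdom k
  have := proxEnvelope_le_add_inner (hρ k) (hbot k) hw (hP k) (L k z) (L k z + t • L k d)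
  rw [add_sub_cancel_left, real_inner_smul_right, norm_smul, Real.norm_eq_abs, mul_pow,
    sq_abs] at this
  rw [map_add, map_smul]
  linarith [mul_le_mul_of_nonneg_left this (hω k)]

theorem envelopeSumGrad_cocoercive (hω : ∀ k, 0 ≤ ω k) (hρ : ∀ k, 0 < ρ k)
    (hh : ∀ k, ConvexE (h k)) (hbot : ∀ k v, h k v ≠ ⊥) (hdom : ∀ k, ∃ v, h k v ≠ ⊤)
    (hP : ∀ k u, IsProxPoint (ρ k) (h k) u (P k u)) (z z' : H) :
    ‖envelopeSumGrad L ω ρ P z - envelopeSumGrad L ω ρ P z'‖ ^ 2 ≤ (∑ k, ω k * ‖L k‖ ^ 2 / ρ k) *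
      ⟪envelopeSumGrad L ω ρ P z - envelopeSumGrad L ω ρ P z', z - z'⟫ := by
  have hdiff : envelopeSumGrad L ω ρ P z - envelopeSumGrad L ω ρ P z' = ∑ k, (ω k / ρ k) •
      ContinuousLinearMap.adjoint (L k) ((L k z - P k (L k z)) - (L k z' - P k (L k z'))) := by
    simp only [envelopeSumGrad, ← sum_sub_distrib, ← smul_sub, ← map_sub]
  have hβ : ∑ k, ω k * ‖L k‖ ^ 2 / ρ k = ∑ k, ω k / ρ k * ‖L k‖ ^ 2 :=
    sum_congr rfl fun k _ => (div_mul_eq_mul_div _ _ _).symm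
  rw [hdiff, hβ]
  refine norm_sum_smul_adjoint_sq_le (fun k => div_nonneg (hω k) (hρ k).le) fun k => ?_
  obtain ⟨w, hw⟩ := hdom k
  rw [map_sub]
  exact sub_prox_firmlyNonexpansive (hρ k) (hh k) (hbot k) hw (hP k) _ _

end EnvelopeSum

theorem proximal_gradient_moreau_envelopes_general
    {H : Type*} [NormedAddCommGroup H] [InnerProductSpace ℝ H] [FiniteDimensional ℝ H]
    {p : ℕ} {G : Fin p → Type*}
    [∀ k, NormedAddCommGroup (G k)] [∀ k, InnerProductSpace ℝ (G k)]
    [∀ k, FiniteDimensional ℝ (G k)]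
    (f : H → EReal)
    (hf_proper : ∃ z, f z ≠ ⊤) (hf_ne_bot : ∀ z, f z ≠ ⊥)
    (hf_lsc : LowerSemicontinuous f) (hf_convex : ConvexE f)
    (h : ∀ k, G k → EReal)
    (hh_proper : ∀ k, ∃ v, h k v ≠ ⊤) (hh_ne_bot : ∀ k v, h k v ≠ ⊥)
    (hh_convex : ∀ k, ConvexE (h k))
    (L : ∀ k, H →L[ℝ] G k)
    (ω : Fin p → ℝ) (hω : ∀ k, 0 < ω k)
    (ρ : Fin p → ℝ) (hρ : ∀ k, 0 < ρ k)
    -- existence of a solution of the minimization problem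
    (xsol : H)
    (hsol : ∀ z : H,
      f xsol + ∑ k, (ω k : EReal) *
          ⨅ v : G k, (h k v + ((1/(2*ρ k) * ‖L k xsol - v‖^2 : ℝ) : EReal)) ≤
        f z + ∑ k, (ω k : EReal) *
          ⨅ v : G k, (h k v + ((1/(2*ρ k) * ‖L k z - v‖^2 : ℝ) : EReal)))
    (β : ℝ) (hβ : β = ∑ k, ω k * ‖L k‖^2 / ρ k)
    (ε : ℝ) (hε : 0 < ε) (hεβ : ε < 1/β)
    (γ : ℕ → ℝ) (hγ : ∀ n, γ n ∈ Set.Icc ε (2/β - ε))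
    -- proximity operators of the `ρ k • h k`
    (P : ∀ k, G k → G k)
    (hP : ∀ k, ∀ v w : G k,
      (ρ k : EReal) * h k (P k v) + ((1/2 * ‖v - P k v‖^2 : ℝ) : EReal) ≤
        (ρ k : EReal) * h k w + ((1/2 * ‖v - w‖^2 : ℝ) : EReal))
    -- the iterates: `x (n+1)` is the proximal point of `y n` relative to `γ n • f`
    (x : ℕ → H)
    (hiter : ∀ n, ∀ w : H,
      (γ n : EReal) * f (x (n+1)) +
          ((1/2 * ‖(x n - γ n • ∑ k, (ω k / ρ k) •
              (ContinuousLinearMap.adjoint (L k)) (L k (x n) - P k (L k (x n)))) -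
            x (n+1)‖^2 : ℝ) : EReal) ≤
        (γ n : EReal) * f w +
          ((1/2 * ‖(x n - γ n • ∑ k, (ω k / ρ k) •
              (ContinuousLinearMap.adjoint (L k)) (L k (x n) - P k (L k (x n)))) -
            w‖^2 : ℝ) : EReal)) :
    ∃ xlim : H, Tendsto x atTop (𝓝 xlim) ∧
      ∀ z : H,
        f xlim + ∑ k, (ω k : EReal) *
            ⨅ v : G k, (h k v + ((1/(2*ρ k) * ‖L k xlim - v‖^2 : ℝ) : EReal)) ≤
          f z + ∑ k, (ω k : EReal) *
            ⨅ v : G k, (h k v + ((1/(2*ρ k) * ‖L k z - v‖^2 : ℝ) : EReal)) := by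
  have hω0 : ∀ k, 0 ≤ ω k := fun k => (hω k).le
  have hβ0 : 0 < β := by
    refine (hβ ▸ sum_nonneg fun k _ => div_nonneg (mul_nonneg (hω0 k) (sq_nonneg _))
      (hρ k).le : 0 ≤ β).lt_of_ne fun h0 => ?_
    rw [← h0, div_zero] at hεβ
    exact hε.not_gt hεβ
  simp only [sum_mul_iInf_eq_envelopeSum hρ hh_ne_bot hh_proper hP] at hsol ⊢
  obtain ⟨z₀, hz₀⟩ := hf_proper
  have hsol_dom := ne_top_of_forall_add_coe_le hf_ne_bot hz₀ hsol
  have hsub : HasSubgradientAt f xsol (-envelopeSumGrad L ω ρ P xsol) :=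
    hf_convex.hasSubgradientAt_of_isMinOn hf_ne_bot hsol_dom
      ((forall_add_coe_le_iff_isMinOn hf_ne_bot hsol_dom).1 hsol)
      fun d => ⟨_, fun t _ => envelopeSum_le_add hω0 hρ hh_ne_bot hh_proper hP xsol d t⟩
  obtain ⟨xlim, hlim, hsublim⟩ := tendsto_forwardBackward hf_convex hf_ne_bot hf_lsc hβ0
    (hβ ▸ envelopeSumGrad_cocoercive hω0 hρ hh_convex hh_ne_bot hh_proper hP) hsub hε hγ hiter
  exact ⟨xlim, hlim, (forall_add_coe_le_iff_isMinOn hf_ne_bot hsublim.1).2 <| hsublim.isMinOn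
    (envelopeSum_add_inner_le hω0 hρ hh_convex hh_ne_bot hh_proper hP xlim)⟩

/-- Convergence of the proximal gradient method for the problem
`minimize f(x) + ∑ₖ ωₖ (Moreau envelope of hₖ with parameter ρₖ)(Lₖ x)`. -/
theorem proximal_gradient_moreau_envelopes
    {H : Type*} [NormedAddCommGroup H] [InnerProductSpace ℝ H] [FiniteDimensional ℝ H]
    {p : ℕ} {G : Fin p → Type*}
    [∀ k, NormedAddCommGroup (G k)] [∀ k, InnerProductSpace ℝ (G k)]
    [∀ k, FiniteDimensional ℝ (G k)]
    (f : H → EReal)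
    (hf_proper : ∃ z, f z ≠ ⊤) (hf_ne_bot : ∀ z, f z ≠ ⊥)
    (hf_lsc : LowerSemicontinuous f) (hf_convex : ConvexE f)
    (h : ∀ k, G k → EReal)
    (hh_proper : ∀ k, ∃ v, h k v ≠ ⊤) (hh_ne_bot : ∀ k v, h k v ≠ ⊥)
    (hh_lsc : ∀ k, LowerSemicontinuous (h k)) (hh_convex : ∀ k, ConvexE (h k))
    (L : ∀ k, H →L[ℝ] G k) (hL : ∀ k, L k ≠ 0)
    (ω : Fin p → ℝ) (hω : ∀ k, 0 < ω k)
    (ρ : Fin p → ℝ) (hρ : ∀ k, 0 < ρ k)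
    -- existence of a solution of the minimization problem
    (xsol : H)
    (hsol : ∀ z : H,
      f xsol + ∑ k, (ω k : EReal) *
          ⨅ v : G k, (h k v + ((1/(2*ρ k) * ‖L k xsol - v‖^2 : ℝ) : EReal)) ≤
        f z + ∑ k, (ω k : EReal) *
          ⨅ v : G k, (h k v + ((1/(2*ρ k) * ‖L k z - v‖^2 : ℝ) : EReal)))
    (β : ℝ) (hβ : β = ∑ k, ω k * ‖L k‖^2 / ρ k)
    (ε : ℝ) (hε : 0 < ε) (hεβ : ε < 1/β)
    (γ : ℕ → ℝ) (hγ : ∀ n, γ n ∈ Set.Icc ε (2/β - ε))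
    -- proximity operators of the `ρ k • h k`
    (P : ∀ k, G k → G k)
    (hP : ∀ k, ∀ v w : G k,
      (ρ k : EReal) * h k (P k v) + ((1/2 * ‖v - P k v‖^2 : ℝ) : EReal) ≤
        (ρ k : EReal) * h k w + ((1/2 * ‖v - w‖^2 : ℝ) : EReal))
    -- the iterates: `x (n+1)` is the proximal point of `y n` relative to `γ n • f`
    (x : ℕ → H)
    (hiter : ∀ n, ∀ w : H,
      (γ n : EReal) * f (x (n+1)) +
          ((1/2 * ‖(x n - γ n • ∑ k, (ω k / ρ k) •
              (ContinuousLinearMap.adjoint (L k)) (L k (x n) - P k (L k (x n)))) -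
            x (n+1)‖^2 : ℝ) : EReal) ≤
        (γ n : EReal) * f w +
          ((1/2 * ‖(x n - γ n • ∑ k, (ω k / ρ k) •
              (ContinuousLinearMap.adjoint (L k)) (L k (x n) - P k (L k (x n)))) -
            w‖^2 : ℝ) : EReal)) :
    ∃ xlim : H, Tendsto x atTop (𝓝 xlim) ∧
      ∀ z : H,
        f xlim + ∑ k, (ω k : EReal) *
            ⨅ v : G k, (h k v + ((1/(2*ρ k) * ‖L k xlim - v‖^2 : ℝ) : EReal)) ≤
          f z + ∑ k, (ω k : EReal) *
            ⨅ v : G k, (h k v + ((1/(2*ρ k) * ‖L k z - v‖^2 : ℝ) : EReal)) :=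
  proximal_gradient_moreau_envelopes_general f hf_proper hf_ne_bot hf_lsc hf_convex h hh_proper
    hh_ne_bot hh_convex L ω hω ρ hρ xsol hsol β hβ ε hε hεβ γ hγ P hP x hiter
end
end

section
/- Let H and G be finite-dimensional real inner product spaces, let y ∈ G, let L : H → G be a nonzero linear map, let C be a nonempty closed convex subset of H such that L(C) is closed, and assume x ↦ (1/2)‖Lx − y‖² attains its minimum over C. Fix x₀ ∈ H, 0 < ε < 1/‖L‖², and a sequence (γₙ) in [ε, 2/‖L‖² − ε], and iterate: pₙ = L xₙ; zₙ = γₙ L*(pₙ − y); xₙ₊₁ = proj_C(xₙ − zₙ). Then pₙ converges to proj_{L(C)} y, the projection of y onto the closed convex set L(C). -/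
open Filter Topology

local notation "⟪" x ", " y "⟫_ℝ" => @inner ℝ _ _ x y
noncomputable section

/-- Variational characterization from the distance-minimizing property. -/
lemma char_of_min {F : Type*} [NormedAddCommGroup F] [InnerProductSpace ℝ F]
    {K : Set F} (h : Convex ℝ K) {u p : F} (hp : p ∈ K)
    (hmin : ∀ w ∈ K, ‖u - p‖ ≤ ‖u - w‖) :
    ∀ w ∈ K, ⟪u - p, w - p⟫_ℝ ≤ 0 := by
  haveI : Nonempty K := ⟨⟨p, hp⟩⟩
  rw [← norm_eq_iInf_iff_real_inner_le_zero h hp]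
  refine le_antisymm (le_ciInf fun w => hmin w w.2) ?_
  exact ciInf_le ⟨0, Set.forall_mem_range.2 fun w => norm_nonneg _⟩ (⟨p, hp⟩ : K)

/-- A quasi-nonexpansiveness inequality for points satisfying the projection
characterization. -/
lemma proj_contract {F : Type*} [NormedAddCommGroup F] [InnerProductSpace ℝ F]
    {K : Set F} {u v p q : F} (hq : q ∈ K) (hp : p ∈ K)
    (hqc : ∀ w ∈ K, ⟪u - q, w - q⟫_ℝ ≤ 0)
    (hpc : ∀ w ∈ K, ⟪v - p, w - p⟫_ℝ ≤ 0) :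
    ‖q - p‖ ≤ ‖u - v‖ := by
  have h1 := hqc p hp
  have h2 := hpc q hq
  have expand : ⟪u - v, q - p⟫_ℝ
      = ⟪q - p, q - p⟫_ℝ - (⟪u - q, p - q⟫_ℝ + ⟪v - p, q - p⟫_ℝ) := by
    simp only [inner_sub_left, inner_sub_right]; ring
  have key : ‖q - p‖ ^ 2 ≤ ⟪u - v, q - p⟫_ℝ := by
    rw [expand, real_inner_self_eq_norm_sq]; linarith
  have cs := real_inner_le_norm (u - v) (q - p)
  nlinarith [norm_nonneg (q - p), norm_nonneg (u - v)]

set_option maxHeartbeats 1000000 in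
/-- The constrained Landweber method computes the projection of `y` onto the image
`L(C)` of a closed convex set `C` under a linear map `L`. -/
theorem landweber_projection_onto_image
    {H G : Type*}
    [NormedAddCommGroup H] [InnerProductSpace ℝ H] [FiniteDimensional ℝ H]
    [NormedAddCommGroup G] [InnerProductSpace ℝ G] [FiniteDimensional ℝ G]
    (y : G) (L : H →L[ℝ] G) (hL : L ≠ 0)
    (C : Set H) (hC_ne : C.Nonempty) (hC_closed : IsClosed C) (hC_convex : Convex ℝ C)
    (hLC_closed : IsClosed (L '' C))
    -- the least squares problem attains its minimum over C
    (xsol : H) (hxsol_mem : xsol ∈ C)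
    (hxsol : ∀ z ∈ C, 1/2 * ‖L xsol - y‖^2 ≤ 1/2 * ‖L z - y‖^2)
    (projC : H → H)
    (hproj : ∀ z : H, projC z ∈ C ∧ ∀ w ∈ C, ‖z - projC z‖ ≤ ‖z - w‖)
    (ε : ℝ) (hε : 0 < ε) (hεL : ε < 1/‖L‖^2)
    (γ : ℕ → ℝ) (hγ : ∀ n, γ n ∈ Set.Icc ε (2/‖L‖^2 - ε))
    (x : ℕ → H)
    (hiter : ∀ n,
      x (n+1) = projC (x n - γ n • (ContinuousLinearMap.adjoint L) (L (x n) - y))) :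
    ∃ q : G, q ∈ L '' C ∧ (∀ w ∈ L '' C, ‖y - q‖ ≤ ‖y - w‖) ∧
      Tendsto (fun n => L (x n)) atTop (𝓝 q) := by
  set A := ContinuousLinearMap.adjoint L with hA
  have hLpos : (0:ℝ) < ‖L‖ := norm_pos_iff.mpr hL
  have hβpos : (0:ℝ) < ‖L‖^2 := by positivity
  have hAnorm : ‖A‖ = ‖L‖ := LinearIsometryEquiv.norm_map _ L
  -- variational inequality for the minimizer
  have hVI : ∀ z ∈ C, 0 ≤ ⟪L xsol - y, L z - L xsol⟫_ℝ := by
    intro z hz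
    set a := ⟪L xsol - y, L z - L xsol⟫_ℝ with ha
    set b := ‖L z - L xsol‖^2 with hb
    have hb0 : 0 ≤ b := sq_nonneg _
    have key : ∀ t : ℝ, 0 < t → t ≤ 1 → 0 ≤ 2*a + t*b := by
      intro t ht0 ht1
      have hmem : xsol + t • (z - xsol) ∈ C := by
        have h := hC_convex hxsol_mem hz (by linarith : (0:ℝ) ≤ 1 - t) ht0.le (by ring)
        have e : (1 - t) • xsol + t • z = xsol + t • (z - xsol) := by module
        rwa [e] at h
      have h2 := hxsol _ hmem
      have hexp : ‖L (xsol + t • (z - xsol)) - y‖^2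
          = ‖L xsol - y‖^2 + 2*t*a + t^2*b := by
        have e : L (xsol + t • (z - xsol)) - y = (L xsol - y) + t • (L z - L xsol) := by
          simp [map_add, map_smul, map_sub]; module
        rw [e, norm_add_sq_real, inner_smul_right, norm_smul]
        simp only [ha, hb, Real.norm_eq_abs]
        rw [mul_pow, sq_abs]
        ring
      rw [hexp] at h2
      have h3 : 0 ≤ t * (2*a + t*b) := by nlinarith
      exact nonneg_of_mul_nonneg_right h3 ht0
    by_contra hneg
    push_neg at hneg
    rcases eq_or_lt_of_le hb0 with hbz | hbpos
    · linarith [key 1 one_pos le_rfl]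
    · have htpos : 0 < min 1 (-a / b) := lt_min one_pos (div_pos (by linarith) hbpos)
      have h4 := key _ htpos (min_le_left _ _)
      have h5 : min 1 (-a / b) * b ≤ -a := by
        calc min 1 (-a / b) * b ≤ (-a / b) * b :=
              mul_le_mul_of_nonneg_right (min_le_right _ _) hbpos.le
          _ = -a := by field_simp
      linarith
  -- fixed-point characterization of xsol
  have hfix : ∀ n, ∀ w ∈ C,
      ⟪(xsol - γ n • A (L xsol - y)) - xsol, w - xsol⟫_ℝ ≤ 0 := by
    intro n w hw
    have e : (xsol - γ n • A (L xsol - y)) - xsol = -(γ n • A (L xsol - y)) := by abel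
    rw [e, inner_neg_left, neg_nonpos, inner_smul_left]
    have h1 : ⟪A (L xsol - y), w - xsol⟫_ℝ = ⟪L xsol - y, L w - L xsol⟫_ℝ := by
      rw [hA, ContinuousLinearMap.adjoint_inner_left, map_sub]
    rw [RCLike.conj_to_real, h1]
    exact mul_nonneg (le_trans hε.le (hγ n).1) (hVI w hw)
  -- key one-step inequality
  have hstep : ∀ n, ‖x (n+1) - xsol‖^2
      ≤ ‖x n - xsol‖^2 - (ε^2*‖L‖^2) * ‖L (x n) - L xsol‖^2 := by
    intro n
    set u := x n - γ n • A (L (x n) - y) with hu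
    set v := xsol - γ n • A (L xsol - y) with hv
    have h1 : ‖x (n+1) - xsol‖ ≤ ‖u - v‖ := by
      rw [hiter n]
      exact proj_contract (hproj u).1 hxsol_mem
        (char_of_min hC_convex (hproj u).1 (hproj u).2) (hfix n)
    set d := x n - xsol with hd
    have hAd : A (L (x n) - y) - A (L xsol - y) = A (L d) := by
      rw [← map_sub]; congr 1; rw [hd, map_sub]; abel
    have huv : u - v = d - γ n • A (L d) := by
      rw [hu, hv, hd, ← hAd]; module
    have hinner : ⟪d, A (L d)⟫_ℝ = ‖L d‖^2 := by
      rw [real_inner_comm, hA, ContinuousLinearMap.adjoint_inner_left,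
        real_inner_self_eq_norm_sq]
    have hAle : ‖A (L d)‖ ≤ ‖L‖ * ‖L d‖ := by
      calc ‖A (L d)‖ ≤ ‖A‖ * ‖L d‖ := A.le_opNorm _
        _ = ‖L‖ * ‖L d‖ := by rw [hAnorm]
    have hexp : ‖u - v‖^2 = ‖d‖^2 - 2*(γ n)*‖L d‖^2 + (γ n)^2 * ‖A (L d)‖^2 := by
      rw [huv, norm_sub_sq_real, inner_smul_right, hinner, norm_smul,
        Real.norm_eq_abs, mul_pow, sq_abs]
      ring
    have hγn := hγ n
    have hγ1 : ε ≤ γ n := hγn.1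
    have hγ2 : γ n ≤ 2/‖L‖^2 - ε := hγn.2
    have hγpos : 0 < γ n := lt_of_lt_of_le hε hγ1
    have hcoef : ε^2*‖L‖^2 ≤ (γ n) * (2 - (γ n) * ‖L‖^2) := by
      have h6 : (γ n) * ‖L‖^2 ≤ 2 - ε*‖L‖^2 := by
        have := mul_le_mul_of_nonneg_right hγ2 hβpos.le
        rw [sub_mul, div_mul_cancel₀] at this
        · linarith
        · exact ne_of_gt hβpos
      have h7 : ε*‖L‖^2 ≤ 2 - (γ n)*‖L‖^2 := by linarith
      calc ε^2*‖L‖^2 = ε * (ε*‖L‖^2) := by ring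
        _ ≤ (γ n) * (2 - (γ n) * ‖L‖^2) := by
            apply mul_le_mul hγ1 h7 (by positivity) hγpos.le
    have hsq : ‖x (n+1) - xsol‖^2 ≤ ‖u - v‖^2 := by
      have := pow_le_pow_left₀ (norm_nonneg _) h1 2
      exact this
    have hbound : (γ n)^2 * ‖A (L d)‖^2 ≤ (γ n)^2 * (‖L‖^2 * ‖L d‖^2) := by
      apply mul_le_mul_of_nonneg_left _ (sq_nonneg _)
      calc ‖A (L d)‖^2 ≤ (‖L‖ * ‖L d‖)^2 :=
            pow_le_pow_left₀ (norm_nonneg _) hAle 2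
        _ = ‖L‖^2 * ‖L d‖^2 := by ring
    have hLd : L d = L (x n) - L xsol := by rw [hd, map_sub]
    rw [← hLd]
    have h10 : (ε^2*‖L‖^2) * ‖L d‖^2 ≤ (γ n * (2 - γ n * ‖L‖^2)) * ‖L d‖^2 :=
      mul_le_mul_of_nonneg_right hcoef (sq_nonneg _)
    linarith [hsq, hexp, hbound, h10]
  -- convergence
  set c := ε^2*‖L‖^2 with hc
  have hcpos : 0 < c := by positivity
  set a : ℕ → ℝ := fun n => ‖x n - xsol‖^2 with haa
  set b : ℕ → ℝ := fun n => ‖L (x n) - L xsol‖^2 with hbb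
  have hbnn : ∀ n, 0 ≤ b n := fun n => sq_nonneg _
  have hanti : Antitone a := antitone_nat_of_succ_le fun n => by
    have := hstep n
    have := mul_nonneg hcpos.le (hbnn n)
    simp only [haa, hbb] at *
    linarith
  obtain ⟨ℓ, hℓ⟩ : ∃ l, Tendsto a atTop (𝓝 l) :=
    ⟨_, tendsto_atTop_ciInf hanti ⟨0, Set.forall_mem_range.2 fun n => sq_nonneg _⟩⟩
  have hdiff : Tendsto (fun n => a n - a (n+1)) atTop (𝓝 0) := by
    have h8 : Tendsto (fun n => a (n+1)) atTop (𝓝 ℓ) :=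
      hℓ.comp (tendsto_add_atTop_nat 1)
    have := hℓ.sub h8
    simpa using this
  have hbtend : Tendsto b atTop (𝓝 0) := by
    apply squeeze_zero hbnn (g := fun n => (a n - a (n+1)) / c)
    · intro n
      rw [le_div_iff₀ hcpos]
      have := hstep n
      simp only [haa, hbb]
      linarith [hstep n]
    · simpa using hdiff.div_const c
  have hnorm : Tendsto (fun n => ‖L (x n) - L xsol‖) atTop (𝓝 0) := by
    have h9 : Tendsto (fun n => Real.sqrt (b n)) atTop (𝓝 (Real.sqrt 0)) :=
      (Real.continuous_sqrt.tendsto 0).comp hbtend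
    simp only [hbb, Real.sqrt_zero, Real.sqrt_sq (norm_nonneg _)] at h9
    exact h9
  refine ⟨L xsol, ⟨xsol, hxsol_mem, rfl⟩, ?_, ?_⟩
  · rintro w ⟨z, hz, rfl⟩
    have := hxsol z hz
    rw [norm_sub_rev y (L xsol), norm_sub_rev y (L z)]
    nlinarith [norm_nonneg (L xsol - y), norm_nonneg (L z - y)]
  · exact tendsto_iff_norm_sub_tendsto_zero.mpr hnorm
end
end

section
/- Let G be a finite-dimensional real inner product space, let C₁, …, C_m be nonempty closed convex subsets of G whose Minkowski sum S = {x₁ + ⋯ + x_m : x₁ ∈ C₁, …, x_m ∈ C_m} is closed, and let y ∈ G. Fix points x_{1,0}, …, x_{m,0} ∈ G, 0 < ε < 1/m, and a sequence (γₙ) in [ε, 2/m − ε], and iterate: pₙ = ∑_{i=1}^m x_{i,n}; zₙ = γₙ(pₙ − y); x_{i,n+1} = proj_{C_i}(x_{i,n} − zₙ) for i = 1,…,m. Then pₙ converges to proj_S y, the projection of y onto S. -/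
/-!
The iteration is the projected gradient method for `f(u) = ‖∑ᵢ uᵢ - y‖²` over
`K = C₁ × ⋯ × C_m ⊆ ℓ²(Fin m; G)`; the linear map `u ↦ ∑ᵢ uᵢ` satisfies `‖∑ᵢ uᵢ‖² ≤ m ‖u‖²`.
Let `q = ∑ᵢ vᵢ` (`v ∈ K`) be the projection of `y` onto `S`, the image of `K`. For step sizes in
`[ε, 2/m - ε]`, the quantity `‖uₙ - v‖² + 2/(m²ε) f(uₙ)` drops by at least `ε (f(uₙ₊₁) - f(v))`
at each step, so the gaps `f(uₙ) - f(v)` are summable and tend to `0`. Since `S` is convex,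
`‖p - q‖² ≤ ‖p - y‖² - ‖q - y‖²` for `p ∈ S`, hence `∑ᵢ uₙ,ᵢ → q`.
-/

open Filter Topology RealInnerProductSpace Set

theorem IsClosed.exists_forall_norm_sub_le {α : Type*} [NormedAddCommGroup α] [ProperSpace α]
    {s : Set α} (hs : IsClosed s) (hne : s.Nonempty) (y : α) :
    ∃ q ∈ s, ∀ w ∈ s, ‖y - q‖ ≤ ‖y - w‖ := by
  obtain ⟨q, hq, hdist⟩ := hs.exists_infDist_eq_dist hne y
  refine ⟨q, hq, fun w hw => ?_⟩
  rw [← dist_eq_norm, ← dist_eq_norm, ← hdist]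
  exact Metric.infDist_le_dist_of_mem hw

section Projection

variable {E : Type*} [NormedAddCommGroup E] [InnerProductSpace ℝ E] {K : Set E} {z q w : E}

theorem inner_sub_nonpos_of_forall_norm_sub_le (hK : Convex ℝ K) (hq : q ∈ K)
    (hmin : ∀ w ∈ K, ‖z - q‖ ≤ ‖z - w‖) (hw : w ∈ K) : ⟪z - q, w - q⟫ ≤ 0 := by
  have : Nonempty K := ⟨⟨q, hq⟩⟩
  refine (norm_eq_iInf_iff_real_inner_le_zero hK hq).1 ?_ w hw
  exact le_antisymm (le_ciInf fun w => hmin w w.2)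
    (ciInf_le (f := fun w : K => ‖z - w‖) ⟨0, forall_mem_range.2 fun _ => norm_nonneg _⟩ ⟨q, hq⟩)

theorem norm_sub_sq_add_norm_sub_sq_le_of_forall_norm_sub_le (hK : Convex ℝ K) (hq : q ∈ K)
    (hmin : ∀ w ∈ K, ‖z - q‖ ≤ ‖z - w‖) (hw : w ∈ K) :
    ‖w - q‖ ^ 2 + ‖z - q‖ ^ 2 ≤ ‖w - z‖ ^ 2 := by
  have h := inner_sub_nonpos_of_forall_norm_sub_le hK hq hmin hw
  rw [show w - z = (w - q) - (z - q) by abel, norm_sub_sq_real (w - q), real_inner_comm]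
  linarith

end Projection

theorem tendsto_zero_of_add_mul_le {W e : ℕ → ℝ} {ε : ℝ} (hε : 0 < ε) (hW : ∀ n, 0 ≤ W n)
    (he : ∀ n, 0 ≤ e n) (h : ∀ n, W (n + 1) + ε * e (n + 1) ≤ W n) :
    Tendsto e atTop (𝓝 0) := by
  have hsum : ∀ N, ∑ k ∈ Finset.range N, e (k + 1) ≤ W 0 / ε := fun N => by
    rw [le_div_iff₀ hε, Finset.sum_mul]
    calc ∑ k ∈ Finset.range N, e (k + 1) * ε
        ≤ ∑ k ∈ Finset.range N, (W k - W (k + 1)) :=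
          Finset.sum_le_sum fun k _ => by linarith [h k]
      _ = W 0 - W N := Finset.sum_range_sub' W N
      _ ≤ W 0 := by linarith [hW N]
  exact (tendsto_add_atTop_iff_nat 1).1
    (summable_of_sum_range_le (fun n => he (n + 1)) hsum).tendsto_atTop_zero

section ProjectedGradient

variable {E F : Type*} [NormedAddCommGroup E] [InnerProductSpace ℝ E]
  [NormedAddCommGroup F] [InnerProductSpace ℝ F] (A : E →ₗ[ℝ] F) {K : Set E}
  {L ε γ : ℝ} {y : F} {u u' v w g : E}

/- A projected gradient step `u' = proj_K (u - γ A*(A u - y))` is encoded, without adjoints, by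
the variational inequality `⟪u - u', w - u'⟫ ≤ γ ⟪A u - y, A (w - u')⟫` for `w ∈ K`; the step
estimates below test it at `w = u` (descent) and at a minimiser `w = v` (Fejér-type bound). -/

theorem inner_sub_le_of_forall_norm_sub_le_of_gradient (hK : Convex ℝ K) (hu' : u' ∈ K)
    (hg : ∀ z, ⟪g, z⟫ = ⟪A u - y, A z⟫)
    (hmin : ∀ w ∈ K, ‖u - γ • g - u'‖ ≤ ‖u - γ • g - w‖) (hw : w ∈ K) :
    ⟪u - u', w - u'⟫ ≤ γ * ⟪A u - y, A (w - u')⟫ := by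
  have h := inner_sub_nonpos_of_forall_norm_sub_le hK hu' hmin hw
  rwa [sub_right_comm, inner_sub_left, real_inner_smul_left, hg, sub_nonpos] at h

theorem mul_norm_sub_sq_le_of_projected_gradient (hA : ∀ z, ‖A z‖ ^ 2 ≤ L * ‖z‖ ^ 2)
    (hγ : 0 ≤ γ) (hVI : ‖u - u'‖ ^ 2 ≤ γ * ⟪A u - y, A (u - u')⟫) :
    (2 - γ * L) * ‖u - u'‖ ^ 2 ≤ γ * (‖A u - y‖ ^ 2 - ‖A u' - y‖ ^ 2) := by
  have hs := mul_le_mul_of_nonneg_left (hA (u - u')) hγ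
  have hexp : A u' - y = (A u - y) - A (u - u') := by rw [map_sub]; abel
  rw [hexp, norm_sub_sq_real (A u - y)]
  nlinarith

theorem norm_sub_sq_le_of_projected_gradient (hA : ∀ z, ‖A z‖ ^ 2 ≤ L * ‖z‖ ^ 2)
    (hγ : 0 ≤ γ) (hVI : ⟪u - u', v - u'⟫ ≤ γ * ⟪A u - y, A (v - u')⟫) :
    ‖u' - v‖ ^ 2 ≤ ‖u - v‖ ^ 2 - (1 - γ * L) * ‖u - u'‖ ^ 2
      - γ * (‖A u' - y‖ ^ 2 - ‖A v - y‖ ^ 2) := by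
  have hsplit : ‖u' - v‖ ^ 2 = ‖u - v‖ ^ 2 - ‖u - u'‖ ^ 2 + 2 * ⟪u - u', v - u'⟫ := by
    rw [show u' - v = (u - v) - (u - u') by abel, norm_sub_sq_real (u - v),
      show u - v = (u - u') - (v - u') by abel, inner_sub_left, real_inner_self_eq_norm_sq,
      real_inner_comm (u - u')]
    ring
  have hu' : A u' - y = (A u - y) - A (u - u') := by rw [map_sub]; abel
  have hv : A (v - u') = (A v - y) - (A u' - y) := by rw [map_sub]; abel
  have hgrad : 2 * ⟪A u - y, A (v - u')⟫
      ≤ ‖A v - y‖ ^ 2 - ‖A u' - y‖ ^ 2 + L * ‖u - u'‖ ^ 2 := by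
    have hra := norm_sub_sq_real (A u - y) (A v - y)
    have hrs := norm_sub_sq_real (A u - y) (A (u - u'))
    have hrb : ⟪A u - y, A u' - y⟫ = ‖A u - y‖ ^ 2 - ⟪A u - y, A (u - u')⟫ := by
      rw [hu', inner_sub_right, real_inner_self_eq_norm_sq]
    rw [← hu'] at hrs
    rw [hv, inner_sub_right]
    linarith [hA (u - u'), sq_nonneg ‖A u - y - (A v - y)‖]
  nlinarith [mul_le_mul_of_nonneg_left hgrad hγ]

theorem lyapunov_step_of_projected_gradient (hA : ∀ z, ‖A z‖ ^ 2 ≤ L * ‖z‖ ^ 2) (hL : 0 < L)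
    (hε : 0 < ε) (hγ : γ ∈ Icc ε (2 / L - ε))
    (hVIu : ‖u - u'‖ ^ 2 ≤ γ * ⟪A u - y, A (u - u')⟫)
    (hVIv : ⟪u - u', v - u'⟫ ≤ γ * ⟪A u - y, A (v - u')⟫) (hv : ‖A v - y‖ ≤ ‖A u' - y‖) :
    ‖u' - v‖ ^ 2 + 2 / (L ^ 2 * ε) * ‖A u' - y‖ ^ 2 + ε * (‖A u' - y‖ ^ 2 - ‖A v - y‖ ^ 2)
      ≤ ‖u - v‖ ^ 2 + 2 / (L ^ 2 * ε) * ‖A u - y‖ ^ 2 := by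
  have hγ0 : 0 ≤ γ := hε.le.trans hγ.1
  have hγL : γ * L ≤ 2 - L * ε := by
    have := mul_le_mul_of_nonneg_right hγ.2 hL.le
    rw [sub_mul, div_mul_cancel₀ _ hL.ne'] at this
    linarith
  have hfejer := norm_sub_sq_le_of_projected_gradient A hA hγ0 hVIv
  have hd0 : 0 ≤ ‖u - u'‖ ^ 2 := sq_nonneg _
  have hdesc : L * ε * ‖u - u'‖ ^ 2 ≤ γ * (‖A u - y‖ ^ 2 - ‖A u' - y‖ ^ 2) :=
    (mul_le_mul_of_nonneg_right (by linarith) hd0).trans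
      (mul_norm_sub_sq_le_of_projected_gradient A hA hγ0 hVIu)
  have hΔ : 0 ≤ ‖A u - y‖ ^ 2 - ‖A u' - y‖ ^ 2 :=
    nonneg_of_mul_nonneg_right ((by positivity : 0 ≤ L * ε * ‖u - u'‖ ^ 2).trans hdesc)
      (hε.trans_le hγ.1)
  -- On the admissible step range, `γ / (2 - γ L) ≤ 2 / (L² ε)`: the descent pays for the
  -- `‖u - u'‖²` that the Fejér bound loses when `γ L > 1`.
  have hd : ‖u - u'‖ ^ 2 ≤ 2 / (L ^ 2 * ε) * (‖A u - y‖ ^ 2 - ‖A u' - y‖ ^ 2) := by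
    rw [div_mul_eq_mul_div, le_div_iff₀ (by positivity)]
    have hγΔ : γ * (‖A u - y‖ ^ 2 - ‖A u' - y‖ ^ 2) ≤ 2 / L * (‖A u - y‖ ^ 2 - ‖A u' - y‖ ^ 2) :=
      mul_le_mul_of_nonneg_right (by linarith [hγ.2]) hΔ
    have hL2 : L * (2 / L * (‖A u - y‖ ^ 2 - ‖A u' - y‖ ^ 2))
        = 2 * (‖A u - y‖ ^ 2 - ‖A u' - y‖ ^ 2) := by field_simp
    nlinarith [mul_le_mul_of_nonneg_left (hdesc.trans hγΔ) hL.le]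
  have hγL1 : (γ * L - 1) * ‖u - u'‖ ^ 2 ≤ 1 * ‖u - u'‖ ^ 2 :=
    mul_le_mul_of_nonneg_right (by nlinarith) hd0
  have hv2 : ‖A v - y‖ ^ 2 ≤ ‖A u' - y‖ ^ 2 := pow_le_pow_left₀ (norm_nonneg _) hv 2
  linarith [mul_le_mul_of_nonneg_right hγ.1 (sub_nonneg.2 hv2)]

theorem tendsto_map_of_projected_gradient (hK : Convex ℝ K) (hA : ∀ z, ‖A z‖ ^ 2 ≤ L * ‖z‖ ^ 2)
    (hL : 0 < L) (hε : 0 < ε) (hv : v ∈ K) (hv_min : ∀ w ∈ K, ‖y - A v‖ ≤ ‖y - A w‖)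
    (γ : ℕ → ℝ) (hγ : ∀ n, γ n ∈ Icc ε (2 / L - ε)) (u g : ℕ → E) (hu : ∀ n, u n ∈ K)
    (hg : ∀ n z, ⟪g n, z⟫ = ⟪A (u n) - y, A z⟫)
    (hstep : ∀ n, ∀ w ∈ K, ‖u n - γ n • g n - u (n + 1)‖ ≤ ‖u n - γ n • g n - w‖) :
    Tendsto (fun n => A (u n)) atTop (𝓝 (A v)) := by
  have hVI n {w} (hw : w ∈ K) := inner_sub_le_of_forall_norm_sub_le_of_gradient A hK (hu (n + 1))
    (hg n) (hstep n) hw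
  have hAK : ∀ w ∈ A '' K, ‖y - A v‖ ≤ ‖y - w‖ := by
    rintro _ ⟨w, hw, rfl⟩
    exact hv_min w hw
  have hgap n : ‖A (u n) - A v‖ ^ 2 ≤ ‖A (u n) - y‖ ^ 2 - ‖A v - y‖ ^ 2 := by
    have := norm_sub_sq_add_norm_sub_sq_le_of_forall_norm_sub_le (hK.linear_image A)
      (mem_image_of_mem A hv) hAK (mem_image_of_mem A (hu n))
    rw [norm_sub_rev y] at this
    linarith
  have hgap_lim : Tendsto (fun n => ‖A (u n) - y‖ ^ 2 - ‖A v - y‖ ^ 2) atTop (𝓝 0) :=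
    tendsto_zero_of_add_mul_le (W := fun n => ‖u n - v‖ ^ 2 + 2 / (L ^ 2 * ε) * ‖A (u n) - y‖ ^ 2)
      hε (fun n => by positivity) (fun n => (sq_nonneg _).trans (hgap n)) fun n =>
        lyapunov_step_of_projected_gradient A hA hL hε (hγ n)
          (real_inner_self_eq_norm_sq (u n - u (n + 1)) ▸ hVI n (hu n)) (hVI n hv)
          (by rw [norm_sub_rev, norm_sub_rev (A _)]; exact hv_min _ (hu (n + 1)))
  have hsq : Tendsto (fun n => ‖A (u n) - A v‖ ^ 2) atTop (𝓝 0) :=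
    squeeze_zero (fun n => sq_nonneg _) hgap hgap_lim
  rw [tendsto_iff_norm_sub_tendsto_zero]
  simpa using hsq.sqrt

end ProjectedGradient

section Product

variable {ι G : Type*} [Fintype ι] [NormedAddCommGroup G]

theorem forall_norm_sub_le_of_forall_norm_ofLp_sub_le {C : ι → Set G}
    {z z' : PiLp 2 (fun _ : ι => G)} (h : ∀ i, ∀ w ∈ C i, ‖z.ofLp i - z'.ofLp i‖ ≤ ‖z.ofLp i - w‖) :
    ∀ w ∈ WithLp.ofLp ⁻¹' univ.pi C, ‖z - z'‖ ≤ ‖z - w‖ := by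
  intro w hw
  rw [← pow_le_pow_iff_left₀ (norm_nonneg _) (norm_nonneg _) two_ne_zero,
    PiLp.norm_sq_eq_of_L2, PiLp.norm_sq_eq_of_L2]
  gcongr with i
  exact h i _ (hw i (mem_univ i))

variable [InnerProductSpace ℝ G]

variable (ι G) in
def sumCoords : PiLp 2 (fun _ : ι => G) →ₗ[ℝ] G := ∑ i, PiLp.projₗ 2 (fun _ : ι => G) i

@[simp]
theorem sumCoords_apply (z : PiLp 2 (fun _ : ι => G)) : sumCoords ι G z = ∑ i, z.ofLp i := by
  simp [sumCoords]

theorem norm_sumCoords_sq_le (z : PiLp 2 (fun _ : ι => G)) :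
    ‖sumCoords ι G z‖ ^ 2 ≤ Fintype.card ι * ‖z‖ ^ 2 := by
  rw [sumCoords_apply, PiLp.norm_sq_eq_of_L2]
  calc ‖∑ i, z.ofLp i‖ ^ 2 ≤ (∑ i, ‖z.ofLp i‖) ^ 2 := by gcongr; exact norm_sum_le _ _
    _ ≤ Fintype.card ι * ∑ i, ‖z.ofLp i‖ ^ 2 := sq_sum_le_card_mul_sum_sq

theorem inner_toLp_const (p : G) (z : PiLp 2 (fun _ : ι => G)) :
    ⟪WithLp.toLp 2 (fun _ : ι => p), z⟫ = ⟪p, sumCoords ι G z⟫ := by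
  simp [PiLp.inner_apply, inner_sum]

theorem image_sumCoords_preimage_pi (C : ι → Set G) :
    sumCoords ι G '' (WithLp.ofLp ⁻¹' univ.pi C)
      = {w | ∃ v : ι → G, (∀ i, v i ∈ C i) ∧ w = ∑ i, v i} := by
  ext w
  constructor
  · rintro ⟨z, hz, rfl⟩
    exact ⟨z.ofLp, fun i => hz i (mem_univ i), (sumCoords_apply z)⟩
  · rintro ⟨v, hv, rfl⟩
    exact ⟨WithLp.toLp 2 v, fun i _ => hv i, by simp⟩

end Product

theorem projection_onto_minkowski_sum_general
    {G : Type*} [NormedAddCommGroup G] [InnerProductSpace ℝ G] [FiniteDimensional ℝ G]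
    {m : ℕ}
    (C : Fin m → Set G)
    (hC_convex : ∀ i, Convex ℝ (C i))
    (S : Set G)
    (hS : S = {w : G | ∃ v : Fin m → G, (∀ i, v i ∈ C i) ∧ w = ∑ i, v i})
    (hS_closed : IsClosed S)
    (y : G)
    (proj : Fin m → G → G)
    (hproj : ∀ i, ∀ z : G, proj i z ∈ C i ∧ ∀ w ∈ C i, ‖z - proj i z‖ ≤ ‖z - w‖)
    (ε : ℝ) (hε : 0 < ε)
    (γ : ℕ → ℝ) (hγ : ∀ n, γ n ∈ Set.Icc ε (2/(m : ℝ) - ε))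
    (x : ℕ → Fin m → G)
    (hiter : ∀ n, ∀ i, x (n+1) i = proj i (x n i - γ n • ((∑ j, x n j) - y))) :
    ∃ q : G, q ∈ S ∧ (∀ w ∈ S, ‖y - q‖ ≤ ‖y - w‖) ∧
      Tendsto (fun n => ∑ i, x n i) atTop (𝓝 q) := by
  have hm : (0 : ℝ) < m :=
    (div_pos_iff_of_pos_left two_pos).1 (by linarith [(hγ 0).1, (hγ 0).2])
  set K : Set (PiLp 2 (fun _ : Fin m => G)) := WithLp.ofLp ⁻¹' univ.pi C
  have hSK : S = sumCoords (Fin m) G '' K := hS.trans (image_sumCoords_preimage_pi C).symm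
  set u : ℕ → PiLp 2 (fun _ : Fin m => G) := fun n => WithLp.toLp 2 (x (n + 1))
  have hu n : u n ∈ K := fun i _ => by simpa [u, hiter n i] using (hproj i _).1
  obtain ⟨q, hqS, hq_min⟩ := hS_closed.exists_forall_norm_sub_le
    ⟨_, hSK ▸ mem_image_of_mem _ (hu 0)⟩ y
  obtain ⟨v, hvK, rfl⟩ := hSK ▸ hqS
  refine ⟨_, hqS, hq_min, (tendsto_add_atTop_iff_nat 1).1 ?_⟩
  have := tendsto_map_of_projected_gradient (sumCoords (Fin m) G)
    ((convex_pi fun i _ => hC_convex i).linear_preimage (WithLp.linearEquiv 2 ℝ _).toLinearMap)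
    (fun z => by simpa using norm_sumCoords_sq_le z) hm hε hvK
    (fun w hw => hq_min _ (hSK ▸ mem_image_of_mem _ hw)) (fun n => γ (n + 1)) (fun n => hγ (n + 1))
    u (fun n => WithLp.toLp 2 (fun _ => ∑ j, x (n + 1) j - y)) hu
    (fun n z => by simp [inner_toLp_const, u])
    (fun n => forall_norm_sub_le_of_forall_norm_ofLp_sub_le fun i w hw => by
      simpa [u, hiter (n + 1) i] using (hproj i _).2 w hw)
  simpa [u] using this

/-- Projection onto a closed Minkowski sum `S = C₁ + ⋯ + C_m` of closed convex sets by
a parallel projected gradient scheme: the sums `pₙ = ∑ᵢ x_{i,n}` converge to `proj_S y`. -/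
theorem projection_onto_minkowski_sum
    {G : Type*} [NormedAddCommGroup G] [InnerProductSpace ℝ G] [FiniteDimensional ℝ G]
    {m : ℕ}
    (C : Fin m → Set G)
    (hC_ne : ∀ i, (C i).Nonempty) (hC_closed : ∀ i, IsClosed (C i))
    (hC_convex : ∀ i, Convex ℝ (C i))
    (S : Set G)
    (hS : S = {w : G | ∃ v : Fin m → G, (∀ i, v i ∈ C i) ∧ w = ∑ i, v i})
    (hS_closed : IsClosed S)
    (y : G)
    (proj : Fin m → G → G)
    (hproj : ∀ i, ∀ z : G, proj i z ∈ C i ∧ ∀ w ∈ C i, ‖z - proj i z‖ ≤ ‖z - w‖)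
    (ε : ℝ) (hε : 0 < ε) (hεm : ε < 1/(m : ℝ))
    (γ : ℕ → ℝ) (hγ : ∀ n, γ n ∈ Set.Icc ε (2/(m : ℝ) - ε))
    (x : ℕ → Fin m → G)
    (hiter : ∀ n, ∀ i, x (n+1) i = proj i (x n i - γ n • ((∑ j, x n j) - y))) :
    ∃ q : G, q ∈ S ∧ (∀ w ∈ S, ‖y - q‖ ≤ ‖y - w‖) ∧
      Tendsto (fun n => ∑ i, x n i) atTop (𝓝 q) :=
  projection_onto_minkowski_sum_general C hC_convex S hS hS_closed y proj hproj ε hε γ hγ x hiter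
end
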